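/- arXiv:0901.1333 — 9 statements merged into one kernel-verified Lean document; each statement's English description precedes it below -/
import Mathlib

section
/- Let G be a finite group, k ≥ 1 an integer, and fix signs s_0,…,s_{k−1} ∈ {+,−}. On H = (ℂ^G)^{⊗k} let L_i^g denote the operator acting as L^g_{s_i} on the i-th tensor factor and as the identity on all other factors, and define the vertex operator A = (1/|G|) ∑_{g∈G} L_0^g L_1^g ⋯ L_{k−1}^g. On H ⊗ ℂ^G define M_i = ∑_{g∈G} L_i^g ⊗ T^g_+ (the auxiliary factor carries T^g_+) and the unit vector |Ψ⟩ = (1/√|G|) ∑_{g∈G} |g⟩ in the auxiliary factor. Then (1_H ⊗ ⟨Ψ|) M_0 M_1 ⋯ M_{k−1} (1_H ⊗ |Ψ⟩) = A and (1_H ⊗ ⟨Ψ|) M_{k−1}† ⋯ M_1† M_0† (1_H ⊗ |Ψ⟩) = A. -/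
open Matrix Kronecker BigOperators

noncomputable section

variable {G : Type*} [Group G] [Fintype G] [DecidableEq G]

/-- `L^g_+ : |z⟩ ↦ |gz⟩` (left multiplication by `g`). -/
def Lp (g : G) : Matrix G G ℂ := Matrix.of fun x z => if x = g * z then 1 else 0

/-- `L^g_- : |z⟩ ↦ |z g⁻¹⟩` (right multiplication by `g⁻¹`). -/
def Lm (g : G) : Matrix G G ℂ := Matrix.of fun x z => if x = z * g⁻¹ then 1 else 0

/-- `T^g_+ = |g⟩⟨g|`. -/
def Tp (g : G) : Matrix G G ℂ := Matrix.of fun x z => if x = g ∧ z = g then 1 else 0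

/-- `T^g_- = |g⁻¹⟩⟨g⁻¹|`. -/
def Tm (g : G) : Matrix G G ℂ := Tp g⁻¹

/-- Signed `L` operator: `true` stands for `+`, `false` for `−`. -/
def Lsgn (s : Bool) (g : G) : Matrix G G ℂ := if s then Lp g else Lm g

/-- Signed `T` operator: `true` stands for `+`, `false` for `−`. -/
def Tsgn (s : Bool) (g : G) : Matrix G G ℂ := if s then Tp g else Tm g

/-- The operator acting as `A` on the `i`-th tensor factor of `(ℂ^G)^{⊗k}`
and as the identity on all other factors. -/
def factor {k : ℕ} (i : Fin k) (A : Matrix G G ℂ) : Matrix (Fin k → G) (Fin k → G) ℂ :=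
  Matrix.of fun x y => if ∀ j, j ≠ i → x j = y j then A (x i) (y i) else 0

/-- The partial matrix element `(1_H ⊗ ⟨ψ|) Z (1_H ⊗ |ψ⟩)` of an operator `Z` on `H ⊗ ℂ^R`. -/
def pme {H R : Type*} [Fintype R] (ψ : R → ℂ) (Z : Matrix (H × R) (H × R) ℂ) :
    Matrix H H ℂ :=
  Matrix.of fun x y => ∑ a : R, ∑ b : R, (starRingEnd ℂ) (ψ a) * Z (x, a) (y, b) * ψ b

lemma Tp_mul (h g : G) : Tp h * Tp g = if h = g then Tp g else 0 := by
  ext x z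
  by_cases hg : h = g <;>
    simp [Tp, Matrix.mul_apply, hg, Finset.sum_ite_eq, and_assoc, Finset.filter_eq'] <;>
    aesop (add simp [Finset.filter_eq'])
lemma Tp_conjT (g : G) : (Tp g)ᴴ = Tp g := by
  ext x z; simp [Tp, Matrix.conjTranspose_apply, and_comm]

-- new ones:
lemma kron_sum_mul {H : Type*} [Fintype H] (A B : G → Matrix H H ℂ) :
    (∑ h : G, A h ⊗ₖ Tp h) * (∑ g : G, B g ⊗ₖ Tp g) = ∑ g : G, (A g * B g) ⊗ₖ Tp g := by
  rw [Finset.sum_mul_sum]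
  have h1 : ∀ h g : G, (A h ⊗ₖ Tp h) * (B g ⊗ₖ Tp g)
      = if h = g then (A g * B g) ⊗ₖ Tp g else 0 := by
    intro h g
    rw [← Matrix.mul_kronecker_mul, Tp_mul]
    split_ifs with hh
    · subst hh; rfl
    · exact Matrix.kronecker_zero _
  simp_rw [h1, Finset.sum_ite_eq, Finset.mem_univ, if_true]

lemma Lsgn_conjT (s : Bool) (g : G) : (Lsgn s g)ᴴ = Lsgn s g⁻¹ := by
  cases s <;> ext x z <;>
    simp [Lsgn, Lp, Lm, Matrix.conjTranspose_apply, eq_comm, eq_inv_mul_iff_mul_eq,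
      eq_mul_inv_iff_mul_eq, mul_inv_eq_iff_eq_mul, inv_mul_eq_iff_eq_mul] <;>
  · split_ifs <;> simp_all [eq_comm] <;> group at * <;> simp_all

lemma factor_conjT {k : ℕ} (i : Fin k) (B : Matrix G G ℂ) :
    (factor i B)ᴴ = factor i Bᴴ := by
  ext x y
  simp only [factor, Matrix.conjTranspose_apply, Matrix.of_apply]
  have : (∀ j, j ≠ i → y j = x j) ↔ (∀ j, j ≠ i → x j = y j) := by
    constructor <;> intro h j hj <;> exact (h j hj).symm
  simp only [this]
  split_ifs <;> simp

lemma prodFactor {k : ℕ} (B : Fin k → Matrix G G ℂ) :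
    ∀ (l : List (Fin k)), l.Nodup →
    ((l.map fun i => factor i (B i)).prod) =
      Matrix.of fun x y => if ∀ j, j ∉ l → x j = y j
        then ((l.map fun i => B i (x i) (y i)).prod) else 0 := by
  intro l
  induction l with
  | nil =>
    intro _
    ext x y
    simp [Matrix.one_apply, funext_iff]
  | cons i t ih =>
    intro hnd
    have hit : i ∉ t := (List.nodup_cons.mp hnd).1
    have hndt := (List.nodup_cons.mp hnd).2
    ext x y
    rw [List.map_cons, List.prod_cons, Matrix.mul_apply]
    simp_rw [ih hndt]
    rw [Finset.sum_eq_single (Function.update x i (y i))]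
    · have h1 : (∀ j, j ≠ i → x j = Function.update x i (y i) j) := by
        intro j hj; simp [Function.update_of_ne hj]
      have h2 : (∀ j, j ∉ t → Function.update x i (y i) j = y j) ↔
          (∀ j, j ∉ (i :: t) → x j = y j) := by
        constructor
        · intro h j hj
          have hji : j ≠ i := fun hh => hj (by simp [hh])
          have hjt : j ∉ t := fun hh => hj (by simp [hh])
          have := h j hjt
          rwa [Function.update_of_ne hji] at this
        · intro h j hj
          by_cases hji : j = i
          · subst hji; simp
          · rw [Function.update_of_ne hji]
            exact h j (by simp [hji, hj])
      have h3 : (t.map fun j => B j (Function.update x i (y i) j) (y j)).prod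
          = (t.map fun j => B j (x j) (y j)).prod := by
        congr 1
        apply List.map_congr_left
        intro j hj
        have hji : j ≠ i := by rintro rfl; exact hit hj
        rw [Function.update_of_ne hji]
      simp only [factor, Matrix.of_apply, if_pos h1, Function.update_self, h3]
      simp only [h2]
      split_ifs <;> simp [List.map_cons, List.prod_cons]
    · intro z _ hz
      simp only [factor, Matrix.of_apply]
      by_cases h1 : ∀ j, j ≠ i → x j = z j
      · have hzi : z i ≠ y i := by
          intro hh
          apply hz
          funext j
          by_cases hj : j = i
          · subst hj; simp [hh]
          · rw [Function.update_of_ne hj, (h1 j hj).symm]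
        rw [if_pos h1, if_neg (fun hc => hzi (hc i hit))]
        simp
      · rw [if_neg h1]; simp
    · intro h; exact absurd (Finset.mem_univ _) h

lemma prod_M {ι H : Type*} [Fintype H] [DecidableEq H]
    (C : ι → G → Matrix H H ℂ) (M : ι → Matrix (H × G) (H × G) ℂ)
    (hM : ∀ i, M i = ∑ g : G, C i g ⊗ₖ Tp g) :
    ∀ l : List ι, l ≠ [] →
      ((l.map M).prod) = ∑ g : G, ((l.map fun i => C i g).prod) ⊗ₖ Tp g := by
  intro l
  induction l with
  | nil => intro h; exact absurd rfl h
  | cons i t ih =>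
    intro _
    by_cases ht : t = []
    · subst ht; simp [hM]
    · rw [List.map_cons, List.prod_cons, ih ht, hM i, kron_sum_mul]
      simp [List.prod_cons]

lemma pme_sum {H : Type*} (ψ : G → ℂ) (Z : G → Matrix (H × G) (H × G) ℂ) :
    pme ψ (∑ g : G, Z g) = ∑ g : G, pme ψ (Z g) := by
  ext x y
  simp only [pme, Matrix.of_apply, Matrix.sum_apply, Finset.mul_sum, Finset.sum_mul]
  rw [Finset.sum_comm]
  refine Eq.trans (Finset.sum_congr rfl fun b _ => Finset.sum_comm) ?_
  rw [Finset.sum_comm]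
  exact Finset.sum_congr rfl fun g _ => Finset.sum_comm

lemma pme_kron {H : Type*} (X : Matrix H H ℂ) (g : G) (ψ : G → ℂ)
    (hψ : ∀ g, ψ g = (Real.sqrt (Fintype.card G) : ℂ)⁻¹) :
    pme ψ (X ⊗ₖ Tp g) = ((Fintype.card G : ℂ))⁻¹ • X := by
  ext x y
  simp only [pme, Matrix.of_apply, Matrix.kroneckerMap_apply, Tp, Matrix.smul_apply,
    smul_eq_mul]
  have h1 : ∀ a b : G, (starRingEnd ℂ) (ψ a) * (X x y * (if a = g ∧ b = g then (1:ℂ) else 0)) * ψ b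
      = (if a = g then (starRingEnd ℂ) (ψ a) * X x y else 0) * (if b = g then ψ b else 0) := by
    intro a b; split_ifs <;> simp_all <;> ring
  simp_rw [h1]
  rw [← Finset.sum_mul_sum, Finset.sum_ite_eq', Finset.sum_ite_eq']
  simp only [Finset.mem_univ, if_true, hψ]
  have hc : ((Real.sqrt (Fintype.card G) : ℝ) : ℂ)⁻¹ * ((Real.sqrt (Fintype.card G) : ℝ) : ℂ)⁻¹
      = ((Fintype.card G : ℂ))⁻¹ := by
    rw [← mul_inv, ← Complex.ofReal_mul, Real.mul_self_sqrt (by positivity)]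
    norm_num
  rw [map_inv₀, Complex.conj_ofReal]
  linear_combination (X x y) * hc

/-- The vertex operator `A = (1/|G|) ∑_g L₀^g ⋯ L_{k-1}^g` is obtained as the
partial matrix element, in the state `|Ψ⟩ = |G|^{-1/2} ∑_g |g⟩` of the auxiliary register,
of the ordered product of the controlled-multiplication operators `Mᵢ = ∑_g Lᵢ^g ⊗ T^g₊`,
and also of the reversed product of their adjoints. -/
theorem statement0 (k : ℕ) (hk : 1 ≤ k) (s : Fin k → Bool)
    (L : Fin k → G → Matrix (Fin k → G) (Fin k → G) ℂ)
    (hL : ∀ i g, L i g = factor i (Lsgn (s i) g))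
    (A : Matrix (Fin k → G) (Fin k → G) ℂ)
    (hA : A = ((Fintype.card G : ℂ))⁻¹ •
      ∑ g : G, ((List.finRange k).map (fun i => L i g)).prod)
    (M : Fin k → Matrix ((Fin k → G) × G) ((Fin k → G) × G) ℂ)
    (hM : ∀ i, M i = ∑ g : G, (L i g) ⊗ₖ Tp g)
    (ψ : G → ℂ) (hψ : ∀ g, ψ g = (Real.sqrt (Fintype.card G) : ℂ)⁻¹) :
    pme ψ (((List.finRange k).map M).prod) = A ∧
    pme ψ ((((List.finRange k).reverse).map (fun i => (M i)ᴴ)).prod) = A := by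
  have hne : List.finRange k ≠ [] := by
    intro h
    have := congrArg List.length h
    simp at this
    omega
  have hneR : (List.finRange k).reverse ≠ [] := by
    intro h
    exact hne (by simpa using h)
  have part1 : pme ψ (((List.finRange k).map M).prod) = A := by
    rw [prod_M L M hM _ hne, pme_sum]
    simp_rw [pme_kron _ _ ψ hψ]
    rw [← Finset.smul_sum, hA]
  refine ⟨part1, ?_⟩
  have hLH : ∀ i g, (L i g)ᴴ = L i g⁻¹ := by
    intro i g
    rw [hL, hL, factor_conjT, Lsgn_conjT]
  have hMH : ∀ i, (M i)ᴴ = ∑ g : G, (L i g⁻¹) ⊗ₖ Tp g := by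
    intro i
    rw [hM i, Matrix.conjTranspose_sum]
    refine Finset.sum_congr rfl fun g _ => ?_
    rw [← hLH]
    ext ⟨x, a⟩ ⟨z, b⟩
    simp [Matrix.conjTranspose_apply, Matrix.kroneckerMap_apply, Tp, star_mul',
      apply_ite (starRingEnd ℂ), and_comm, mul_comm]
  have hrev : ∀ g : G, (((List.finRange k).reverse).map (fun i => L i g)).prod
      = ((List.finRange k).map (fun i => L i g)).prod := by
    intro g
    simp_rw [hL]
    rw [prodFactor (fun i => Lsgn (s i) g) _ ((List.nodup_reverse).mpr (List.nodup_finRange k)),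
      prodFactor (fun i => Lsgn (s i) g) _ (List.nodup_finRange k)]
    ext x y
    simp only [Matrix.of_apply, List.mem_reverse]
    have hp : ((List.finRange k).reverse.map fun i => Lsgn (s i) g (x i) (y i)).prod
        = ((List.finRange k).map fun i => Lsgn (s i) g (x i) (y i)).prod := by
      rw [List.map_reverse, List.prod_reverse]
    rw [hp]
  rw [prod_M (fun i g => L i g⁻¹) (fun i => (M i)ᴴ) hMH _ hneR, pme_sum]
  simp_rw [pme_kron _ _ ψ hψ]
  rw [← Finset.smul_sum]
  have hsum : ∑ g : G, (((List.finRange k).reverse).map (fun i => L i g⁻¹)).prod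
      = ∑ g : G, ((List.finRange k).map (fun i => L i g)).prod := by
    rw [Finset.sum_congr rfl fun g (_ : g ∈ Finset.univ) => hrev g⁻¹]
    exact Fintype.sum_equiv (Equiv.inv G)
      (fun g => ((List.finRange k).map (fun i => L i g⁻¹)).prod)
      (fun g => ((List.finRange k).map (fun i => L i g)).prod) (fun g => rfl)
  rw [hsum, hA]
end
end

section
/- Let G be a finite group with |G| ≥ 2 and let σ, τ ∈ {+,−} be signs. On ℂ^G ⊗ ℂ^G ⊗ ℂ^G define M = ∑_{g∈G} L^g_σ ⊗ T^g_+ ⊗ 1 (vertex-type: L^g_σ on the first factor, control T^g_+ on the second) and N = ∑_{h∈G} T^h_τ ⊗ 1 ⊗ L^h_+ (plaquette-type: T^h_τ on the first factor, L^h_+ on the third). Then [M, N] ≠ 0. -/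
open Matrix Kronecker BigOperators

noncomputable section

variable {G : Type*} [Group G] [Fintype G] [DecidableEq G]

lemma Mentry (σ : Bool) (x1 x2 x3 y1 y2 y3 : G) :
    (∑ g : G, (Lsgn σ g ⊗ₖ Tp g) ⊗ₖ (1 : Matrix G G ℂ)) ((x1,x2),x3) ((y1,y2),y3)
      = (if x2 = y2 ∧ x3 = y3 then Lsgn σ x2 x1 y1 else 0) := by
  simp only [Matrix.sum_apply, Matrix.kroneckerMap_apply, Tp, Matrix.of_apply, Matrix.one_apply]
  rw [Finset.sum_eq_single x2]
  · by_cases h2 : x2 = y2 <;> by_cases h3 : x3 = y3 <;> subst_vars <;> simp_all <;>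
      exact fun h => absurd h.symm h2
  · intro b _ hb; simp [Ne.symm hb]
  · simp

lemma Nentry (τ : Bool) (x1 x2 x3 y1 y2 y3 : G) :
    (∑ h : G, (Tsgn τ h ⊗ₖ (1 : Matrix G G ℂ)) ⊗ₖ Lp h) ((x1,x2),x3) ((y1,y2),y3)
      = (if x1 = y1 ∧ x2 = y2 then Lp (if τ then x1 else x1⁻¹) x3 y3 else 0) := by
  cases τ <;>
    simp only [Tsgn, Tm, Tp, if_true, if_false, Matrix.sum_apply, Matrix.kroneckerMap_apply,
      Matrix.of_apply, Matrix.one_apply, Bool.false_eq_true]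
  · rw [Finset.sum_eq_single x1⁻¹]
    · by_cases h1 : x1 = y1 <;> by_cases h2 : x2 = y2 <;> subst_vars <;> simp_all <;>
        exact fun h => absurd h.symm h1
    · intro b _ hb
      have : x1 ≠ b⁻¹ := fun h => hb (by simp [h])
      simp [this]
    · simp
  · rw [Finset.sum_eq_single x1]
    · by_cases h1 : x1 = y1 <;> by_cases h2 : x2 = y2 <;> subst_vars <;> simp_all <;>
        exact fun h => absurd h.symm h1
    · intro b _ hb; simp [Ne.symm hb]
    · simp

/-- If `|G| ≥ 2`, a vertex-type controlled operator and a plaquette-type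
controlled operator acting on the same edge (the first tensor factor; the auxiliary registers
being the second and third factors) do not commute. -/
theorem statement4 (hG : 2 ≤ Fintype.card G) (σ τ : Bool)
    (M N : Matrix ((G × G) × G) ((G × G) × G) ℂ)
    (hM : M = ∑ g : G, (Lsgn σ g ⊗ₖ Tp g) ⊗ₖ (1 : Matrix G G ℂ))
    (hN : N = ∑ h : G, (Tsgn τ h ⊗ₖ (1 : Matrix G G ℂ)) ⊗ₖ Lp h) :
    M * N ≠ N * M := by
  obtain ⟨g, hg⟩ := Fintype.exists_ne_of_one_lt_card (by omega) (1 : G)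
  set a : G := if σ then g else g⁻¹ with ha
  have haL : Lsgn σ g a 1 = 1 := by
    cases σ <;> simp [Lsgn, Lp, Lm, ha]
  have ha1 : a ≠ 1 := by cases σ <;> simpa [ha] using hg
  set b : G := if τ then a else a⁻¹ with hb
  have hb1 : b ≠ 1 := by cases τ <;> simpa [hb] using ha1
  intro h
  have h1 := congrFun (congrFun h ((a, g), b)) ((1, g), 1)
  rw [Matrix.mul_apply, Matrix.mul_apply] at h1
  rw [hM, hN] at h1
  simp only [Fintype.sum_prod_type, Mentry, Nentry, mul_ite, ite_mul, zero_mul, mul_zero,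
    if_true, and_true, true_and] at h1
  simp only [ite_and, Finset.sum_ite_eq, Finset.sum_ite_eq', Finset.mem_univ, if_true,
    Finset.sum_ite_irrel, Finset.sum_const_zero] at h1
  rw [haL, ← hb] at h1
  simp [Lp, hb1] at h1
end
end

section
/- Let G be a finite group. Define operators D_j (j ∈ G×G) on ℂ^{G×G} by D_j |k⟩ = ∑_{m ∈ G×G} Ω^k_{m j} |m⟩; explicitly D_{(h₁,g₁)} |(h,g)⟩ = δ_{h₁, (g g₁⁻¹)⁻¹ h (g g₁⁻¹)} · |(h, g g₁⁻¹)⟩. Then for all m, n ∈ G×G one has D_m D_n = ∑_{k ∈ G×G} Ω^k_{mn} D_k; that is, the operators D_j furnish a representation of the multiplication of Drinfeld's quantum double D(G). -/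
open Matrix Kronecker BigOperators

noncomputable section

variable {G : Type*} [Group G] [Fintype G] [DecidableEq G]

/-- The structure constants `Ω^k_{mn}` of the quantum double: for `k = (h,g)`, `m = (h₀,g₀)`,
`n = (h₁,g₁)`, `Ω^k_{mn} = δ_{g,g₀g₁} δ_{h₀,h} δ_{h₁, g₀⁻¹ h g₀}`. -/
def Om (k m n : G × G) : ℂ :=
  if k.2 = m.2 * n.2 ∧ m.1 = k.1 ∧ n.1 = m.2⁻¹ * k.1 * m.2 then 1 else 0

/-- `e^{(h,g)} = δ_{g,1}`. -/
def eQD (k : G × G) : ℂ := if k.2 = 1 then 1 else 0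

/-- The operator `D_j` on `ℂ^{G×G}` defined by `D_j |k⟩ = ∑_m Ω^k_{m j} |m⟩`. -/
def Dop (j : G × G) : Matrix (G × G) (G × G) ℂ := Matrix.of fun m k => Om k m j

private lemma mul_ite_ite (P Q : Prop) [Decidable P] [Decidable Q] :
    (if P then (1:ℂ) else 0) * (if Q then 1 else 0) = if P ∧ Q then 1 else 0 := by
  split_ifs <;> simp_all

/-- The operators `D_j` on `ℂ^{G×G}`, `D_j |k⟩ = ∑_m Ω^k_{m j} |m⟩`, satisfy
`D_m D_n = ∑_k Ω^k_{mn} D_k`, i.e. they furnish a representation of the multiplication of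
Drinfeld's quantum double `D(G)`. -/
theorem statement6 (m n : G × G) :
    Dop m * Dop n = ∑ k : G × G, Om k m n • Dop k := by
  ext a b
  simp only [Matrix.mul_apply, Matrix.sum_apply, Matrix.smul_apply, Dop, Matrix.of_apply, Om,
    smul_eq_mul, mul_ite_ite]
  rw [Finset.sum_eq_single ((a.1, a.2 * m.2) : G × G),
      Finset.sum_eq_single ((m.1, m.2 * n.2) : G × G)]
  · apply if_congr _ rfl rfl
    dsimp only
    constructor
    · rintro ⟨⟨-, -, h2⟩, h3, h4, h5⟩
      exact ⟨⟨rfl, rfl, by rw [h5, h2, ← h4]; group⟩, by rw [h3]; group, h4,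
        by rw [h2, h4]⟩
    · rintro ⟨⟨-, -, h2⟩, h3, h4, h5⟩
      exact ⟨⟨rfl, rfl, by rw [h5, h4]⟩, by rw [h3]; group, h4,
        by rw [h2, h5]; group⟩
  · rintro c - hc
    rw [if_neg]
    rintro ⟨⟨h1, h2, -⟩, -⟩
    exact hc (Prod.ext h2.symm h1)
  · intro h; exact absurd (Finset.mem_univ _) h
  · rintro c - hc
    rw [if_neg]
    rintro ⟨⟨h1, h2, -⟩, -⟩
    exact hc (Prod.ext h2.symm h1)
  · intro h; exact absurd (Finset.mem_univ _) h
end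
end

section
/- Let G be a finite group, let D_j (j ∈ G×G) be the operators on ℂ^{G×G} defined by D_j |k⟩ = ∑_{m ∈ G×G} Ω^k_{m j} |m⟩, and let |Ψ⟩ = (1/√|G|) ∑_{h∈G} |(h,1)⟩ ∈ ℂ^{G×G}. Then for every j ∈ G×G one has ⟨Ψ| D_j |Ψ⟩ = e^j / |G|. -/
open Matrix Kronecker BigOperators

noncomputable section

variable {G : Type*} [Group G] [Fintype G] [DecidableEq G]

/-- For `|Ψ⟩ = |G|^{-1/2} ∑_h |(h,1)⟩`, one has `⟨Ψ| D_j |Ψ⟩ = e^j / |G|`. -/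
theorem statement7 (j : G × G)
    (ψ : G × G → ℂ)
    (hψ : ∀ p, ψ p = if p.2 = 1 then (Real.sqrt (Fintype.card G) : ℂ)⁻¹ else 0) :
    star ψ ⬝ᵥ (Dop j).mulVec ψ = eQD j / (Fintype.card G : ℂ) := by
  simp only [dotProduct, mulVec, Dop, Om, eQD, hψ, Pi.star_apply, of_apply, dotProduct]
  rw [Fintype.sum_prod_type]
  simp only [Fintype.sum_prod_type]
  simp [apply_ite, Finset.sum_ite_eq, mul_ite, ite_mul, mul_zero, zero_mul, eq_comm (a := j.1)]
  by_cases h : j.2 = 1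
  · simp only [h, eq_self_iff_true, true_and, if_true]
    simp only [show ∀ a b : G, (a = b ∧ b = j.1) ↔ (b = j.1 ∧ a = j.1) from
      fun a b => by constructor <;> rintro ⟨h1, h2⟩ <;> simp_all, ite_and]
    simp [Finset.sum_ite_eq', ← mul_inv, ← Complex.ofReal_mul,
      Real.mul_self_sqrt (Nat.cast_nonneg _), one_div]
  · simp [Ne.symm h, h]
end
end

section
/- Let G be a finite group, k ≥ 1 an integer, and fix signs t_0,…,t_{k−1} ∈ {+,−}. On H = (ℂ^G)^{⊗k} let T_i^g denote the operator acting as T^g_{t_i} on the i-th tensor factor and as the identity elsewhere. For each i define the elementary (triangle) ribbon-operators F_i^{(h,g)} = T_i^{g⁻¹} (independent of h), and define operators G_j^{κ} (κ ∈ G×G, 1 ≤ j ≤ k) recursively by G_1^{κ} = F_0^{κ} and G_{j+1}^{κ} = ∑_{m,n ∈ G×G} Ω^{κ}_{mn} G_j^{m} F_j^{n}. Then for every 1 ≤ j ≤ k and every (h,g) ∈ G×G, G_j^{(h,g)} = ∑ T_0^{a_0} T_1^{a_1} ⋯ T_{j−1}^{a_{j−1}}, the sum over all tuples (a_0,…,a_{j−1})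 ∈ G^j with a_{j−1} ⋯ a_1 a_0 = g⁻¹; in particular G_j^{(h,g)} does not depend on h. -/
/-!
Induction on `j`. In the recursion, `Ω^κ_{mn}` forces `m = (h, c)` and `n = (c⁻¹hc, c⁻¹g)`, so
`G_{j+1}^{(h,g)} = ∑_c G_j^{(h,c)} T_j^{g⁻¹c}`. By induction `G_j^{(h,c)}` is the sum over the
tuples with `a_{j-1}⋯a_0 = c⁻¹`; every tuple lies in exactly one of these fibres, so regrouping by
the tuple and putting `a_j = g⁻¹c` gives the sum over the tuples of length `j + 1` with
`a_j⋯a_0 = g⁻¹`.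
-/

open Matrix Kronecker BigOperators

noncomputable section

variable {G : Type*} [Group G] [Fintype G] [DecidableEq G]

def revProd {M : Type*} [Monoid M] {n : ℕ} (a : Fin n → M) : M :=
  ((List.finRange n).reverse.map a).prod

theorem revProd_snoc {M : Type*} [Monoid M] {n : ℕ} (a : Fin n → M) (x : M) :
    revProd (Fin.snoc a x : Fin (n + 1) → M) = x * revProd a := by
  simp [revProd, List.finRange_succ_last, List.map_reverse, Function.comp_def]

theorem sum_filter_revProd_succ {N : Type*} [AddCommMonoid N] {n : ℕ} (g : G)
    (f : (Fin (n + 1) → G) → N) :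
    ∑ a ∈ Finset.univ.filter (fun a => revProd a = g), f a
      = ∑ a : Fin n → G, f (Fin.snoc a (g * (revProd a)⁻¹)) := by
  rw [Finset.sum_filter, ← (Fin.snocEquiv fun _ => G).sum_comp, Fintype.sum_prod_type_right]
  refine Finset.sum_congr rfl fun a _ => ?_
  change ∑ x : G, (if revProd (Fin.snoc a x : Fin (n + 1) → G) = g then f (Fin.snoc a x) else 0)
    = _
  simp only [revProd_snoc, ← eq_mul_inv_iff_mul_eq, Finset.sum_ite_eq', Finset.mem_univ, if_true]

theorem sum_sum_filter_eq_inv {ι N : Type*} [Fintype ι] [AddCommMonoid N] (p : ι → G)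
    (f : ι → G → N) :
    ∑ c : G, ∑ a ∈ Finset.univ.filter (fun a => p a = c⁻¹), f a c = ∑ a, f a (p a)⁻¹ := by
  rw [Finset.sum_comm' (t' := Finset.univ) (s' := fun a => {(p a)⁻¹})]
  · simp
  · simp [eq_inv_iff_mul_eq_one, mul_eq_one_comm]

theorem sum_Om_smul {N : Type*} [AddCommMonoid N] [Module ℂ N] (κ : G × G)
    (X : G × G → G × G → N) :
    ∑ m, ∑ n, Om κ m n • X m n = ∑ c : G, X (κ.1, c) (c⁻¹ * κ.1 * c, c⁻¹ * κ.2) := by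
  have hOm : ∀ m n,
      Om κ m n = if m.1 = κ.1 ∧ n = (m.2⁻¹ * κ.1 * m.2, m.2⁻¹ * κ.2) then 1 else 0 :=
    fun m n => if_congr (by rw [Prod.ext_iff, eq_comm (a := κ.2), ← eq_inv_mul_iff_mul_eq]; tauto)
      rfl rfl
  simp only [hOm, ite_smul, one_smul, zero_smul, ite_and, Finset.sum_ite_eq',
    Finset.mem_univ, if_true, Fintype.sum_prod_type, Finset.sum_ite_irrel, Finset.sum_const_zero]

section TensorProducts

variable {k : ℕ} (t : Fin k → Bool)

/-- `T_0^{a_0} ⋯ T_{j-1}^{a_{j-1}}` on `(ℂ^G)^{⊗k}`. -/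
def tensorTProd {j : ℕ} (hjk : j ≤ k) (a : Fin j → G) : Matrix (Fin k → G) (Fin k → G) ℂ :=
  ((List.finRange j).map
    (fun i => factor (Fin.castLE hjk i) (Tsgn (t (Fin.castLE hjk i)) (a i)))).prod

theorem tensorTProd_snoc {j : ℕ} (hj : j < k) (a : Fin j → G) (x : G) :
    tensorTProd t hj (Fin.snoc a x)
      = tensorTProd t hj.le a * factor ⟨j, hj⟩ (Tsgn (t ⟨j, hj⟩) x) := by
  simp [tensorTProd, List.finRange_succ_last, Function.comp_def]
  rfl

theorem sum_tensorTProd_succ {j : ℕ} (hj : j < k) (g : G) :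
    ∑ a ∈ Finset.univ.filter (fun a : Fin (j + 1) → G => revProd a = g⁻¹), tensorTProd t hj a
      = ∑ a : Fin j → G, tensorTProd t hj.le a
          * factor ⟨j, hj⟩ (Tsgn (t ⟨j, hj⟩) (g⁻¹ * (revProd a)⁻¹)) := by
  simp only [sum_filter_revProd_succ, tensorTProd_snoc]

end TensorProducts

/-- For the elementary (triangle) ribbon-operators `Fᵢ^{(h,g)} = Tᵢ^{g⁻¹}`,
the operators defined recursively by `G₁ = F₀` and `G_{j+1}^κ = ∑_{m,n} Ω^κ_{mn} G_j^m F_j^n`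
satisfy `G_j^{(h,g)} = ∑_{a_{j-1}⋯a₁a₀ = g⁻¹} T₀^{a₀} ⋯ T_{j-1}^{a_{j-1}}` for all `1 ≤ j ≤ k`;
in particular they do not depend on `h`. -/
theorem statement9 (k : ℕ) (hk : 1 ≤ k) (t : Fin k → Bool)
    (F : Fin k → (G × G) → Matrix (Fin k → G) (Fin k → G) ℂ)
    (hF : ∀ i (κ : G × G), F i κ = factor i (Tsgn (t i) κ.2⁻¹))
    (Gop : ℕ → (G × G) → Matrix (Fin k → G) (Fin k → G) ℂ)
    (hG1 : ∀ κ, Gop 1 κ = F ⟨0, hk⟩ κ)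
    (hGrec : ∀ j, 1 ≤ j → ∀ hj : j < k, ∀ κ,
      Gop (j + 1) κ = ∑ m : G × G, ∑ n : G × G, Om κ m n • (Gop j m * F ⟨j, hj⟩ n)) :
    ∀ j, 1 ≤ j → ∀ hjk : j ≤ k, ∀ h g : G,
      Gop j (h, g) =
        ∑ a ∈ Finset.univ.filter
            (fun a : Fin j → G => (((List.finRange j).reverse).map a).prod = g⁻¹),
          ((List.finRange j).map
            (fun i => factor (Fin.castLE hjk i) (Tsgn (t (Fin.castLE hjk i)) (a i)))).prod := by
  intro j hj
  induction j, hj using Nat.le_induction with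
  | base =>
    intro hjk h g
    rw [hG1, hF]
    refine ((sum_tensorTProd_succ t hjk g).trans ?_).symm
    simp [tensorTProd, revProd]
  | succ j hj ih =>
    intro hjk h g
    have hjk' : j ≤ k := Nat.le_of_succ_le hjk
    calc Gop (j + 1) (h, g)
        = ∑ c : G, Gop j (h, c) * F ⟨j, hjk⟩ (c⁻¹ * h * c, c⁻¹ * g) := by
          rw [hGrec j hj hjk, sum_Om_smul]
      _ = ∑ c : G, ∑ a ∈ Finset.univ.filter (fun a : Fin j → G => revProd a = c⁻¹),
            tensorTProd t hjk' a * factor ⟨j, hjk⟩ (Tsgn (t ⟨j, hjk⟩) (g⁻¹ * c)) := by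
          simp only [ih hjk', hF, Finset.sum_mul, _root_.mul_inv_rev, inv_inv]
          rfl
      _ = ∑ a : Fin j → G, tensorTProd t hjk' a
            * factor ⟨j, hjk⟩ (Tsgn (t ⟨j, hjk⟩) (g⁻¹ * (revProd a)⁻¹)) :=
          sum_sum_filter_eq_inv _ _
      _ = _ := (sum_tensorTProd_succ t hjk g).symm
end
end

section
/- Let G be a finite group, k ≥ 1 an integer, and fix signs s_0,…,s_{k−1} ∈ {+,−}. On H = (ℂ^G)^{⊗k} let L_i^h denote the operator acting as L^h_{s_i} on the i-th tensor factor and as the identity elsewhere. Let D_j (j ∈ G×G) be the operators on ℂ^{G×G} defined by D_j |κ⟩ = ∑_{m ∈ G×G} Ω^{κ}_{m j} |m⟩, and let |Ψ⟩ = (1/√|G|) ∑_{h∈G} |(h,1)⟩ ∈ ℂ^{G×G}. On H ⊗ ℂ^{G×G} define M_i = ∑_{h∈G} L_i^h ⊗ D_{(h,1)}. Then (1_H ⊗ ⟨Ψ|) M_0 M_1 ⋯ M_{k−1} (1_H ⊗ |Ψ⟩) = (1/|G|) ∑_{h∈G} L_0^h L_1^h ⋯ L_{k−1}^h, and the same operator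 is obtained from the reversed adjoint product: (1_H ⊗ ⟨Ψ|) M_{k−1}† ⋯ M_0† (1_H ⊗ |Ψ⟩) = (1/|G|) ∑_{h∈G} L_0^h ⋯ L_{k−1}^h. -/
open Matrix Kronecker BigOperators

noncomputable section

variable {G : Type*} [Group G] [Fintype G] [DecidableEq G]

/-!
Each `Mᵢ` is block diagonal with respect to the basis `|(h, g)⟩` of `ℂ^{G×G}`, with block
`Lᵢ^{g⁻¹hg}` at `(h, g)`. Hence `M₀ ⋯ M_{k-1}` is block diagonal with blocks
`L₀^{g⁻¹hg} ⋯ L_{k-1}^{g⁻¹hg}`, and `|Ψ⟩` spreads uniformly over the blocks with `g = 1`, which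
produces the average over `h`. For the reversed product of adjoints the blocks are
`(L₀^h ⋯ L_{k-1}^h)† = L_{k-1}^{h⁻¹} ⋯ L₀^{h⁻¹}`; operators on distinct tensor factors commute, so
this is `L₀^{h⁻¹} ⋯ L_{k-1}^{h⁻¹}`, and reindexing by `h ↦ h⁻¹` gives the same average.
-/
section TensorFactor

variable {α : Type*} [DecidableEq α] {k : ℕ}

theorem factor_conjTranspose (i : Fin k) (A : Matrix α α ℂ) : (factor i A)ᴴ = factor i Aᴴ := by
  ext x y
  simp only [factor, conjTranspose_apply, of_apply, eq_comm (a := y _)]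
  split_ifs <;> simp

variable [Fintype α]

theorem factor_mul_apply (i : Fin k) (A : Matrix α α ℂ) (N : Matrix (Fin k → α) (Fin k → α) ℂ)
    (x y : Fin k → α) :
    (factor i A * N) x y = ∑ c, A (x i) c * N (Function.update x i c) y := by
  have hsupport : (Finset.univ.filter fun z : Fin k → α => ∀ j, j ≠ i → x j = z j) =
      Finset.univ.image (Function.update x i) := by
    ext z
    simp only [Finset.mem_filter, Finset.mem_univ, true_and, Finset.mem_image,
      Function.update_eq_iff, exists_eq_left]
  calc (factor i A * N) x y
      = ∑ z ∈ Finset.univ.filter (fun z : Fin k → α => ∀ j, j ≠ i → x j = z j),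
          A (x i) (z i) * N z y := by
        simp only [mul_apply, factor, of_apply, ite_mul, zero_mul, Finset.sum_filter]
    _ = ∑ c, A (x i) c * N (Function.update x i c) y := by
        rw [hsupport, Finset.sum_image fun _ _ _ _ h => Function.update_injective x i h]
        simp only [Function.update_self]

theorem factor_mul_factor_apply {i j : Fin k} (hij : i ≠ j) (A B : Matrix α α ℂ)
    (x y : Fin k → α) :
    (factor i A * factor j B) x y =
      if ∀ l, l ≠ i → l ≠ j → x l = y l then A (x i) (y i) * B (x j) (y j) else 0 := by
  have hcond : ∀ c, (∀ l, l ≠ j → Function.update x i c l = y l) ↔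
      c = y i ∧ ∀ l, l ≠ i → l ≠ j → x l = y l := by
    intro c
    constructor
    · intro h
      refine ⟨by simpa using h i hij, fun l hli hlj => ?_⟩
      simpa [Function.update_of_ne hli] using h l hlj
    · rintro ⟨rfl, h⟩ l hlj
      by_cases hli : l = i
      · subst hli; simp
      · simpa [Function.update_of_ne hli] using h l hli hlj
  rw [factor_mul_apply]
  simp only [factor, of_apply, hcond, Function.update_of_ne hij.symm, ite_and, mul_ite, mul_zero]
  split_ifs <;> simp

theorem factor_commute {i j : Fin k} (hij : i ≠ j) (A B : Matrix α α ℂ) :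
    Commute (factor i A) (factor j B) := by
  ext x y
  rw [factor_mul_factor_apply hij, factor_mul_factor_apply hij.symm, mul_comm]
  simp only [imp.swap (a := _ ≠ i)]

theorem list_prod_reverse_map_factor {l : List (Fin k)} (hl : l.Nodup)
    (A : Fin k → Matrix α α ℂ) :
    (l.map fun i => factor i (A i)).reverse.prod = (l.map fun i => factor i (A i)).prod :=
  (List.reverse_perm _).prod_eq' <| List.pairwise_reverse.mpr <| List.pairwise_map.mpr <|
    hl.imp fun hij => (factor_commute hij _ _).symm

end TensorFactor

section Signs

variable {Γ : Type*} [Group Γ] [DecidableEq Γ]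

theorem Lp_conjTranspose (g : Γ) : (Lp g)ᴴ = Lp g⁻¹ := by
  ext x z
  simp only [Lp, conjTranspose_apply, of_apply, eq_inv_mul_iff_mul_eq, eq_comm (a := z)]
  split_ifs <;> simp

theorem Lm_conjTranspose (g : Γ) : (Lm g)ᴴ = Lm g⁻¹ := by
  ext x z
  simp only [Lm, conjTranspose_apply, of_apply, inv_inv, eq_mul_inv_iff_mul_eq, eq_comm (a := x)]
  split_ifs <;> simp

theorem Lsgn_conjTranspose (s : Bool) (g : Γ) : (Lsgn s g)ᴴ = Lsgn s g⁻¹ := by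
  cases s
  · exact Lm_conjTranspose g
  · exact Lp_conjTranspose g

end Signs

theorem sum_kronecker_Dop {H H' : Type*} (A : G → Matrix H H' ℂ) :
    ∑ h : G, A h ⊗ₖ Dop (h, 1) = blockDiagonal fun a => A (a.2⁻¹ * a.1 * a.2) := by
  ext ⟨x, a⟩ ⟨y, b⟩
  simp only [Matrix.sum_apply, kroneckerMap_apply, Dop, Om, of_apply, blockDiagonal_apply',
    mul_one]
  by_cases hab : a = b
  · subst hab
    simp
  · have hne : ¬(b.2 = a.2 ∧ a.1 = b.1) := fun h => hab (Prod.ext h.2 h.1.symm)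
    simp [← and_assoc, hne, hab]

theorem pme_blockDiagonal {H R : Type*} [Fintype R] [DecidableEq R] (ψ : R → ℂ)
    (B : R → Matrix H H ℂ) : pme ψ (blockDiagonal B) = ∑ a, (star (ψ a) * ψ a) • B a := by
  ext x y
  simp only [pme, blockDiagonal_apply', of_apply, Matrix.sum_apply, Matrix.smul_apply,
    smul_eq_mul, mul_ite, ite_mul, mul_zero, zero_mul, Finset.sum_ite_eq, Finset.mem_univ, if_true]
  exact Finset.sum_congr rfl fun a _ => by rw [starRingEnd_apply]; ring

theorem list_prod_map_blockDiagonal {ι m o : Type*} [Fintype m] [DecidableEq m] [Fintype o]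
    [DecidableEq o] {R : Type*} [Semiring R] (l : List ι) (B : ι → o → Matrix m m R) :
    (l.map fun i => blockDiagonal (B i)).prod =
      blockDiagonal fun a => (l.map fun i => B i a).prod := by
  induction l with
  | nil => exact blockDiagonal_one.symm
  | cons i l ih => simp only [List.map_cons, List.prod_cons, ih, blockDiagonal_mul]

theorem pme_blockDiagonal_eq_average {H : Type*} (ψ : G × G → ℂ)
    (hψ : ∀ p, ψ p = if p.2 = 1 then (Real.sqrt (Fintype.card G) : ℂ)⁻¹ else 0)
    (B : G × G → Matrix H H ℂ) :
    pme ψ (blockDiagonal B) = (Fintype.card G : ℂ)⁻¹ • ∑ h : G, B (h, 1) := by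
  have hweight : ∀ a, star (ψ a) * ψ a = if a.2 = 1 then (Fintype.card G : ℂ)⁻¹ else 0 := by
    intro a
    rw [hψ]
    split_ifs
    · rw [star_inv₀, Complex.star_def, Complex.conj_ofReal, ← mul_inv, ← Complex.ofReal_mul,
        Real.mul_self_sqrt (Nat.cast_nonneg _), Complex.ofReal_natCast]
    · simp
  rw [pme_blockDiagonal, Fintype.sum_prod_type, Finset.smul_sum]
  simp only [hweight, ite_smul, zero_smul, Finset.sum_ite_eq', Finset.mem_univ, if_true]

theorem conjTranspose_prod_factor_Lsgn {k : ℕ} (s : Fin k → Bool) (g : G) :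
    ((List.finRange k).map fun i => factor i (Lsgn (s i) g)).prodᴴ =
      ((List.finRange k).map fun i => factor i (Lsgn (s i) g⁻¹)).prod := by
  rw [conjTranspose_list_prod, List.map_map,
    ← list_prod_reverse_map_factor (List.nodup_finRange k)]
  simp only [Function.comp_def, factor_conjTranspose, Lsgn_conjTranspose]

theorem statement10_general (k : ℕ) (s : Fin k → Bool)
    (M : Fin k → Matrix ((Fin k → G) × (G × G)) ((Fin k → G) × (G × G)) ℂ)
    (hM : ∀ i, M i = ∑ h : G, (factor i (Lsgn (s i) h)) ⊗ₖ Dop (h, 1))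
    (ψ : G × G → ℂ)
    (hψ : ∀ p, ψ p = if p.2 = 1 then (Real.sqrt (Fintype.card G) : ℂ)⁻¹ else 0) :
    pme ψ (((List.finRange k).map M).prod) =
      ((Fintype.card G : ℂ))⁻¹ •
        ∑ h : G, ((List.finRange k).map (fun i => factor i (Lsgn (s i) h))).prod ∧
    pme ψ ((((List.finRange k).reverse).map (fun i => (M i)ᴴ)).prod) =
      ((Fintype.card G : ℂ))⁻¹ •
        ∑ h : G, ((List.finRange k).map (fun i => factor i (Lsgn (s i) h))).prod := by
  set L : G → Matrix (Fin k → G) (Fin k → G) ℂ :=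
    fun h => ((List.finRange k).map fun i => factor i (Lsgn (s i) h)).prod with hL
  have hprod : ((List.finRange k).map M).prod = blockDiagonal fun a => L (a.2⁻¹ * a.1 * a.2) := by
    rw [show M = fun i => blockDiagonal fun a => factor i (Lsgn (s i) (a.2⁻¹ * a.1 * a.2)) from
      funext fun i => (hM i).trans (sum_kronecker_Dop _), list_prod_map_blockDiagonal]
  have hprod_adjoint : (((List.finRange k).reverse).map fun i => (M i)ᴴ).prod =
      ((List.finRange k).map M).prodᴴ := by
    rw [conjTranspose_list_prod, List.map_map, List.map_reverse]
    rfl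
  constructor
  · rw [hprod, pme_blockDiagonal_eq_average ψ hψ]
    simp only [inv_one, one_mul, mul_one]
  · rw [hprod_adjoint, hprod, blockDiagonal_conjTranspose, pme_blockDiagonal_eq_average ψ hψ]
    simp only [hL, conjTranspose_prod_factor_Lsgn, mul_one, inv_one, one_mul]
    exact congrArg _ (Equiv.sum_comp (Equiv.inv G) L)

/-- With `Mᵢ = ∑_h Lᵢ^h ⊗ D_{(h,1)}` and `|Ψ⟩ = |G|^{-1/2} ∑_h |(h,1)⟩`,
the partial matrix element of the ordered product `M₀ ⋯ M_{k-1}` (and of the reversed product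
of adjoints) equals `(1/|G|) ∑_h L₀^h ⋯ L_{k-1}^h`. -/
theorem statement10 (k : ℕ) (hk : 1 ≤ k) (s : Fin k → Bool)
    (M : Fin k → Matrix ((Fin k → G) × (G × G)) ((Fin k → G) × (G × G)) ℂ)
    (hM : ∀ i, M i = ∑ h : G, (factor i (Lsgn (s i) h)) ⊗ₖ Dop (h, 1))
    (ψ : G × G → ℂ)
    (hψ : ∀ p, ψ p = if p.2 = 1 then (Real.sqrt (Fintype.card G) : ℂ)⁻¹ else 0) :
    pme ψ (((List.finRange k).map M).prod) =
      ((Fintype.card G : ℂ))⁻¹ •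
        ∑ h : G, ((List.finRange k).map (fun i => factor i (Lsgn (s i) h))).prod ∧
    pme ψ ((((List.finRange k).reverse).map (fun i => (M i)ᴴ)).prod) =
      ((Fintype.card G : ℂ))⁻¹ •
        ∑ h : G, ((List.finRange k).map (fun i => factor i (Lsgn (s i) h))).prod :=
  statement10_general k s M hM ψ hψ
end
end

section
/- In the clock-gadget setting with clock dimension n ≥ 2, the following two identities hold: P₀ W₀ P₁ W₁ P₁ ⋯ P₁ W_{n−1} P₀ = (Γ₀ M₀ M₁ ⋯ M_{n−1} Γ₀) ⊗ |0⟩⟨0|, and P₀ W_{n−1}† P₁ W_{n−2}† P₁ ⋯ P₁ W₀† P₀ = (Γ₀ M_{n−1}† ⋯ M₁† M₀† Γ₀) ⊗ |0⟩⟨0|. (These are the operators Θ_n^{↓} and Θ_n^{↑}.) -/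
/-! Since `Wᵢ P₀ = 0` unless `i + 1 = 0`, and `Wᵢ† P₀ = 0` unless `i = 0`, every `P₁ = 1 - P₀`
between two consecutive hops acts as the identity and can be dropped. The bare product of hops
telescopes, `|i⟩⟨i+1| · |i+1⟩⟨i+2| = |i⟩⟨i+2|`, to `(M₀ ⋯ M_{n-1}) ⊗ |0⟩⟨n|` with `|n⟩ = |0⟩`;
the product of the `Wᵢ†` in reverse order is its adjoint. The outer `P₀`s contribute `Γ₀ · Γ₀`. -/

open Matrix Kronecker BigOperators

noncomputable section

variable {S : Type*} [Fintype S] [DecidableEq S]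

/-- The ground-space projection `P₀ = Γ₀ ⊗ |0⟩⟨0|` on `H_S ⊗ ℂⁿ`. -/
def P0 (n : ℕ) [NeZero n] (Γ₀ : Matrix S S ℂ) : Matrix (S × Fin n) (S × Fin n) ℂ :=
  Γ₀ ⊗ₖ Matrix.single 0 0 1

/-- The hopping operator `Wᵢ = Mᵢ ⊗ |i⟩⟨i+1|` (clock indices taken mod `n`). -/
def Wop {n : ℕ} [NeZero n] (M : Fin n → Matrix S S ℂ) (i : Fin n) :
    Matrix (S × Fin n) (S × Fin n) ℂ :=
  M i ⊗ₖ Matrix.single i (i + 1) 1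

theorem List.prod_intersperse_of_mul_eq_self {G : Type*} [Monoid G] (p : G) :
    ∀ l : List G, (∀ x ∈ l.dropLast, x * p = x) → (l.intersperse p).prod = l.prod
  | [], _ | [_], _ => rfl
  | x :: y :: l, h => by
    have hx : x * p = x := h x (by simp)
    have ih := prod_intersperse_of_mul_eq_self p (y :: l) fun z hz =>
      h z (by rw [dropLast_cons_cons]; exact mem_cons_of_mem x hz)
    rw [intersperse_cons_cons, prod_cons, prod_cons, ← mul_assoc, hx, ih, ← prod_cons]

theorem List.isChain_succ_finRange (n : ℕ) [NeZero n] :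
    (List.finRange n).IsChain fun i j => j = i + 1 := by
  refine isChain_iff_getElem.mpr fun k hk => Fin.ext ?_
  simp [Fin.val_add, Nat.mod_eq_of_lt (by simpa using hk : k + 1 < n)]

theorem List.add_one_ne_zero_of_mem_dropLast_finRange {n : ℕ} [NeZero n] {i : Fin n}
    (hi : i ∈ (List.finRange n).dropLast) : i + 1 ≠ 0 := by
  obtain ⟨m, rfl⟩ := Nat.exists_eq_succ_of_ne_zero (NeZero.ne n)
  rw [finRange_succ_last, dropLast_concat, mem_map] at hi
  obtain ⟨j, -, rfl⟩ := hi
  rw [Fin.coeSucc_eq_succ]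
  exact j.succ_ne_zero

theorem List.ne_zero_of_mem_dropLast_finRange_reverse {n : ℕ} [NeZero n] {i : Fin n}
    (hi : i ∈ (List.finRange n).reverse.dropLast) : i ≠ 0 := by
  obtain ⟨m, rfl⟩ := Nat.exists_eq_succ_of_ne_zero (NeZero.ne n)
  rw [dropLast_reverse, mem_reverse, finRange_succ, tail_cons, mem_map] at hi
  obtain ⟨j, -, rfl⟩ := hi
  exact j.succ_ne_zero

namespace Matrix

variable {R ι m : Type*} [CommSemiring R] [Fintype m] [DecidableEq m] [Fintype ι] [DecidableEq ι]

theorem prod_map_kronecker_single_of_isChain (next : ι → ι) (A : ι → Matrix m m R) :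
    ∀ (l : List ι) (hl : l ≠ []), l.IsChain (fun i j => j = next i) →
      (l.map fun i => A i ⊗ₖ single i (next i) (1 : R)).prod
        = (l.map A).prod ⊗ₖ single (l.head hl) (next (l.getLast hl)) 1
  | [a], _, _ => by simp
  | a :: b :: l, _, h => by
    obtain ⟨rfl, hl⟩ := List.isChain_cons_cons.mp h
    rw [List.map_cons, List.prod_cons,
      prod_map_kronecker_single_of_isChain next A _ (List.cons_ne_nil _ _) hl,
      List.head_cons, ← mul_kronecker_mul, single_mul_single_same, one_mul,
      List.getLast_cons_cons, ← List.prod_cons, ← List.map_cons, List.head_cons]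

end Matrix

section ClockGadget

variable {n : ℕ} [NeZero n]

theorem prod_map_Wop_finRange (M : Fin n → Matrix S S ℂ) :
    ((List.finRange n).map (Wop M)).prod = ((List.finRange n).map M).prod ⊗ₖ single 0 0 1 := by
  obtain ⟨m, rfl⟩ := Nat.exists_eq_succ_of_ne_zero (NeZero.ne n)
  have hne : List.finRange (m + 1) ≠ [] := List.finRange_succ ▸ List.cons_ne_nil _ _
  have hhead : (List.finRange (m + 1)).head hne = 0 := by
    simp only [List.finRange_succ, List.head_cons]
  have hlast : (List.finRange (m + 1)).getLast hne + 1 = 0 := by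
    simp only [List.finRange_succ_last, List.getLast_concat, Fin.last_add_one]
  have := prod_map_kronecker_single_of_isChain (· + 1) M _ hne (List.isChain_succ_finRange _)
  rwa [hhead, hlast] at this

theorem prod_map_conjTranspose_Wop_finRange_reverse (M : Fin n → Matrix S S ℂ) :
    ((List.finRange n).reverse.map fun i => (Wop M i)ᴴ).prod
      = ((List.finRange n).reverse.map fun i => (M i)ᴴ).prod ⊗ₖ single 0 0 1 := by
  have := congrArg conjTranspose (prod_map_Wop_finRange M)
  simpa [conjTranspose_list_prod, conjTranspose_kronecker, List.map_reverse, Function.comp_def]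
    using this

theorem Wop_mul_one_sub_P0 (M : Fin n → Matrix S S ℂ) (Γ₀ : Matrix S S ℂ) {i : Fin n}
    (hi : i + 1 ≠ 0) : Wop M i * (1 - P0 n Γ₀) = Wop M i := by
  rw [mul_sub, mul_one, sub_eq_self, Wop, P0, ← mul_kronecker_mul,
    single_mul_single_of_ne _ _ _ _ hi, kronecker_zero]

theorem conjTranspose_Wop_mul_one_sub_P0 (M : Fin n → Matrix S S ℂ) (Γ₀ : Matrix S S ℂ)
    {i : Fin n} (hi : i ≠ 0) : (Wop M i)ᴴ * (1 - P0 n Γ₀) = (Wop M i)ᴴ := by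
  rw [mul_sub, mul_one, sub_eq_self, Wop, P0, conjTranspose_kronecker, conjTranspose_single,
    ← mul_kronecker_mul, single_mul_single_of_ne _ _ _ _ hi, kronecker_zero]

omit [DecidableEq S] in
theorem P0_mul_kronecker_single_mul_P0 (Γ₀ A : Matrix S S ℂ) :
    P0 n Γ₀ * (A ⊗ₖ single 0 0 1) * P0 n Γ₀ = (Γ₀ * A * Γ₀) ⊗ₖ single 0 0 1 := by
  rw [P0, ← mul_kronecker_mul, ← mul_kronecker_mul, single_mul_single_same,
    single_mul_single_same, one_mul, one_mul]

end ClockGadget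

theorem statement13_general (n : ℕ) [NeZero n]
    (Γ₀ : Matrix S S ℂ)
    (M : Fin n → Matrix S S ℂ) :
    P0 n Γ₀ *
        (List.intersperse (1 - P0 n Γ₀) ((List.finRange n).map (Wop M))).prod *
        P0 n Γ₀
      = (Γ₀ * ((List.finRange n).map M).prod * Γ₀) ⊗ₖ Matrix.single 0 0 1 ∧
    P0 n Γ₀ *
        (List.intersperse (1 - P0 n Γ₀)
          (((List.finRange n).reverse).map (fun i => (Wop M i)ᴴ))).prod *
        P0 n Γ₀
      = (Γ₀ * (((List.finRange n).reverse).map (fun i => (M i)ᴴ)).prod * Γ₀) ⊗ₖ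
          Matrix.single 0 0 1 := by
  constructor
  · rw [List.prod_intersperse_of_mul_eq_self, prod_map_Wop_finRange,
      P0_mul_kronecker_single_mul_P0]
    simp only [← List.map_dropLast, List.forall_mem_map]
    exact fun i hi => Wop_mul_one_sub_P0 M Γ₀ (List.add_one_ne_zero_of_mem_dropLast_finRange hi)
  · rw [List.prod_intersperse_of_mul_eq_self, prod_map_conjTranspose_Wop_finRange_reverse,
      P0_mul_kronecker_single_mul_P0]
    simp only [← List.map_dropLast, List.forall_mem_map]
    exact fun i hi =>
      conjTranspose_Wop_mul_one_sub_P0 M Γ₀ (List.ne_zero_of_mem_dropLast_finRange_reverse hi)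

/-- In the clock-gadget setting,
`P₀ W₀ P₁ W₁ P₁ ⋯ P₁ W_{n-1} P₀ = (Γ₀ M₀ M₁ ⋯ M_{n-1} Γ₀) ⊗ |0⟩⟨0|` and
`P₀ W_{n-1}† P₁ ⋯ P₁ W₀† P₀ = (Γ₀ M_{n-1}† ⋯ M₁† M₀† Γ₀) ⊗ |0⟩⟨0|`
(these are the operators `Θₙ↓` and `Θₙ↑`). -/
theorem statement13 (n : ℕ) [NeZero n] (hn : 2 ≤ n)
    (Γ₀ : Matrix S S ℂ) (hΓproj : Γ₀ * Γ₀ = Γ₀) (hΓsa : Γ₀ᴴ = Γ₀)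
    (M : Fin n → Matrix S S ℂ) :
    P0 n Γ₀ *
        (List.intersperse (1 - P0 n Γ₀) ((List.finRange n).map (Wop M))).prod *
        P0 n Γ₀
      = (Γ₀ * ((List.finRange n).map M).prod * Γ₀) ⊗ₖ Matrix.single 0 0 1 ∧
    P0 n Γ₀ *
        (List.intersperse (1 - P0 n Γ₀)
          (((List.finRange n).reverse).map (fun i => (Wop M i)ᴴ))).prod *
        P0 n Γ₀
      = (Γ₀ * (((List.finRange n).reverse).map (fun i => (M i)ᴴ)).prod * Γ₀) ⊗ₖ
          Matrix.single 0 0 1 :=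
  statement13_general n Γ₀ M
end
end

section
/- In the clock-gadget setting with clock dimension n ≥ 2, assume the proportionality conditions (i)–(iv) hold. Let 1 ≤ m ≤ n, ε = (ε₁,…,ε_{m−1}) ∈ {0,1}^{m−1}, and Y = (Y₁,…,Y_m) with each Y_j ∈ ⋃_{i} {W_i, W_i†}, and set Θ(ε,Y) = P₀ Y₁ P_{ε₁} Y₂ P_{ε₂} ⋯ P_{ε_{m−1}} Y_m P₀. If the data (m, ε, Y) is neither (n, (1,…,1), (W₀, W₁,…,W_{n−1})) nor (n, (1,…,1), (W_{n−1}†, W_{n−2}†,…,W₀†)), then there exists a scalar c ∈ ℂ with Θ(ε,Y) = c · P₀. -/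
/-!
Lift the clock to heights in `ℤ`. Read from the left, `Wᵢ` moves the clock from `i` to `i + 1`
carrying `Mᵢ`, and `Wᵢ†` moves it from `i + 1` to `i` carrying `Mᵢ†`; so `Θ(ε,Y)` is `0` or
`(Γ₀ B₁ I₁ ⋯ Bₘ Iₘ) ⊗ |0⟩⟨0|` for a walk of `m` steps `±1` returning to `0` mod `n`, where `Bⱼ`
is `M_h` or `M_{h-1}†` at height `h`, and `Iⱼ ∈ {1, Γ₀, 1 - Γ₀}` is `1` unless the clock reads
`0`. A walk of length `m ≤ n` either runs `n` steps in one direction, and then the projections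
`P₀` met on the way force one of the two excluded operators, or it turns, and then it never
reaches a nonzero multiple of `n`: it is a closed walk on `ℤ` with all insertions at height `0`.

By (i)–(iii), the product along a closed walk from height `h` lies in `span {1, N_h}`,
`N_h = M_h M_h†` (split off the first excursion and induct). By (ii) and (iv), the set
`Γ₀ · span {1, N₀}` is stable under right multiplication by `span {1, N₀}`, `Γ₀` and `1 - Γ₀`,
and `Γ₀ · span {1, N₀} · Γ₀ ⊆ ℂ Γ₀`. If some `Mᵢ` vanishes, (iii) forces all of them to vanish.
-/

open Matrix Kronecker BigOperators

noncomputable section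

variable {S : Type*} [Fintype S] [DecidableEq S]

namespace ClockGadget

open Submodule

section SpanOnePair

variable {K A : Type*} [CommRing K] [Ring A] [Algebra K A] {N Γ x y u v N' : A}

theorem mul_mem_span_one_pair (hN : N * N ∈ K ∙ N) (hx : x ∈ span K {1, N})
    (hy : y ∈ span K {1, N}) : x * y ∈ span K {1, N} := by
  obtain ⟨a, b, rfl⟩ := mem_span_pair.1 hx
  obtain ⟨c, d, rfl⟩ := mem_span_pair.1 hy
  obtain ⟨e, he⟩ := mem_span_singleton.1 hN
  refine mem_span_pair.2 ⟨a * c, a * d + b * c + b * d * e, ?_⟩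
  simp only [add_mul, mul_add, smul_mul_smul_comm, one_mul, mul_one, ← he, smul_smul]
  module

theorem mul_mul_mem_of_mem_span_one_pair (huv : u * v ∈ K ∙ N) (hN' : u * N' * v ∈ K ∙ N)
    (hx : x ∈ span K {1, N'}) : u * x * v ∈ K ∙ N := by
  obtain ⟨a, b, rfl⟩ := mem_span_pair.1 hx
  simp only [mul_add, add_mul, mul_smul_comm, smul_mul_assoc, mul_one]
  exact add_mem (smul_mem _ _ huv) (smul_mem _ _ hN')

theorem mul_mul_mem_of_isIdempotentElem (hΓ : IsIdempotentElem Γ)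
    (hN : Γ * N * Γ ∈ K ∙ Γ) (hx : x ∈ span K {1, N}) : Γ * x * Γ ∈ K ∙ Γ := by
  obtain ⟨a, b, rfl⟩ := mem_span_pair.1 hx
  simp only [mul_add, add_mul, mul_smul_comm, smul_mul_assoc, mul_one, hΓ.eq]
  exact add_mem (smul_mem _ _ (mem_span_singleton_self Γ)) (smul_mem _ _ hN)

theorem exists_mul_mul_eq_of_isIdempotentElem (hΓ : IsIdempotentElem Γ) (hN : Γ * N * Γ ∈ K ∙ Γ)
    (hx : x ∈ span K {1, N}) {I : A} (hI : I = Γ ∨ I = 1 - Γ) :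
    ∃ y ∈ span K {1, N}, Γ * x * I = Γ * y := by
  obtain ⟨c, hc⟩ := mem_span_singleton.1 (mul_mul_mem_of_isIdempotentElem hΓ hN hx)
  have hc1 : c • (1 : A) ∈ span K {1, N} := smul_mem _ _ (subset_span (by simp))
  rcases hI with rfl | rfl
  · exact ⟨c • 1, hc1, by rw [← hc, mul_smul_comm, mul_one]⟩
  · refine ⟨x - c • 1, sub_mem hx hc1, ?_⟩
    rw [mul_sub, mul_sub, mul_one, ← hc, mul_smul_comm, mul_one]

end SpanOnePair

theorem mul_prod_range_mul_eq {M : Type*} [Monoid M] (a : M) (b c : ℕ → M) (k : ℕ) :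
    a * b 0 * ((List.range k).map fun j => c j * b (j + 1)).prod
      = a * ((List.range k).map fun j => b j * c j).prod * b k := by
  induction k with
  | zero => simp
  | succ k ih => simp only [List.prod_range_succ, ← mul_assoc, ih]

section Height

def stepSign (b : Bool) : ℤ := if b then 1 else -1

def height (s : ℕ → Bool) (t : ℕ) : ℤ := ∑ j ∈ Finset.range t, stepSign (s j)

variable {s : ℕ → Bool}

@[simp] theorem height_zero : height s 0 = 0 := rfl

theorem height_succ (t : ℕ) : height s (t + 1) = height s t + stepSign (s t) :=
  Finset.sum_range_succ _ t

theorem abs_height_sub_le {a b : ℕ} (hab : a ≤ b) :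
    |height s b - height s a| ≤ (b : ℤ) - a := by
  induction b, hab using Nat.le_induction with
  | base => simp
  | succ b hab ih =>
    rw [height_succ, abs_le] at *
    cases s b <;> simp only [stepSign] <;> push_cast <;> omega

theorem exists_height_eq_of_one_le (σ : Bool) (c : ℕ) :
    ∀ k, 1 ≤ stepSign σ * (height s (c + k) - height s c) →
      ∃ b, c ≤ b ∧ b < c + k ∧ height s b = height s c ∧ s b = σ
  | 0, h => by simp at h
  | k + 1, h => by
    by_cases hk : 1 ≤ stepSign σ * (height s (c + k) - height s c)
    · obtain ⟨b, hcb, hbk, hb⟩ := exists_height_eq_of_one_le σ c k hk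
      exact ⟨b, hcb, by omega, hb⟩
    · refine ⟨c + k, by omega, by omega, ?_⟩
      rw [← add_assoc, height_succ] at h
      cases σ <;> cases hs : s (c + k) <;> simp [stepSign, hs] at h hk ⊢ <;> omega

theorem height_of_forall_eq {σ : Bool} {m : ℕ} (hσ : ∀ j < m, s j = σ) :
    ∀ t ≤ m, height s t = stepSign σ * t
  | 0, _ => by simp
  | t + 1, ht => by
    rw [height_succ, height_of_forall_eq hσ t (by omega), hσ t (by omega)]
    push_cast
    ring

theorem not_dvd_height_of_forall_eq {σ : Bool} {m n t : ℕ} (hσ : ∀ j < m, s j = σ)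
    (ht0 : 0 < t) (htm : t ≤ m) (htn : t < n) : ¬ (n : ℤ) ∣ height s t := by
  rw [height_of_forall_eq hσ t htm]
  intro h
  have h' : (n : ℤ) ∣ t := by cases σ <;> simpa [stepSign] using h
  exact absurd (Nat.le_of_dvd ht0 (Int.natCast_dvd_natCast.1 h')) (by omega)

/-- A walk of length `m ≤ n` that turns stays within distance `n / 2` of its start and of its
end, so it cannot reach a nonzero multiple of `n`. -/
theorem height_eq_zero_of_dvd {m n j k t : ℕ} (hmn : m ≤ n) (hjk : j < k) (hkm : k < m)
    (hs : s j ≠ s k) (hm : (n : ℤ) ∣ height s m) (htm : t ≤ m) (ht : (n : ℤ) ∣ height s t) :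
    height s t = 0 := by
  have h₁ := abs_le.1 (abs_height_sub_le (s := s) (Nat.zero_le j))
  have h₂ := abs_le.1 (abs_height_sub_le (s := s) (show j + 1 ≤ k by omega))
  have h₃ := abs_le.1 (abs_height_sub_le (s := s) (show k + 1 ≤ m by omega))
  have h₄ := abs_le.1 (abs_height_sub_le (s := s) (Nat.zero_le t))
  have h₅ := abs_le.1 (abs_height_sub_le (s := s) htm)
  have hj := height_succ (s := s) j
  have hk := height_succ (s := s) k
  have hjk : stepSign (s j) + stepSign (s k) = 0 := by
    cases hsj : s j <;> cases hsk : s k <;> simp_all [stepSign]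
  simp only [height_zero, Nat.cast_zero, sub_zero] at h₁ h₄
  have hm0 : height s m = 0 := Int.eq_zero_of_abs_lt_dvd hm (abs_lt.2 ⟨by omega, by omega⟩)
  exact Int.eq_zero_of_abs_lt_dvd ht (abs_lt.2 ⟨by omega, by omega⟩)

end Height

section Loops

variable {K A : Type*} [CommRing K] [Ring A] [Algebra K A] [Star A]

def gram (f : ℤ → A) (z : ℤ) : A := f z * star (f z)

def stepAt (f : ℤ → A) (h : ℤ) (σ : Bool) : A := if σ then f h else star (f (h - 1))

def walkProd (f : ℤ → A) (s : ℕ → Bool) (a k : ℕ) : A :=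
  ((List.range' a k).map fun j => stepAt f (height s j) (s j)).prod

variable (K) in
/-- Conditions (i)–(iii) read on heights in `ℤ` rather than on the clock `ℤ/n`;
`star_mul_self_mem` is (iii) solved for `M_{i-1}† M_{i-1}`, which needs `Mᵢ ≠ 0`. -/
structure LoopConditions (f : ℤ → A) : Prop where
  gram_mul_self_mem : ∀ z, gram f z * gram f z ∈ K ∙ gram f z
  conj_gram_mem : ∀ z, f z * gram f (z + 1) * star (f z) ∈ K ∙ gram f z
  star_mul_self_mem : ∀ z, star (f (z - 1)) * f (z - 1) ∈ K ∙ gram f z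

def IsBaseDecoration (s : ℕ → Bool) (Γ : A) (I : ℕ → A) (t : ℕ) : Prop :=
  ∀ j < t, I j = 1 ∨ height s (j + 1) = 0 ∧ (I j = Γ ∨ I j = 1 - Γ)

variable {f : ℤ → A} {s : ℕ → Bool} {Γ : A} {I : ℕ → A}

theorem walkProd_zero (a : ℕ) : walkProd f s a 0 = 1 := rfl

theorem walkProd_one (a : ℕ) : walkProd f s a 1 = stepAt f (height s a) (s a) := by
  simp [walkProd]

theorem walkProd_add (a k l : ℕ) :
    walkProd f s a (k + l) = walkProd f s a k * walkProd f s (a + k) l := by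
  simp only [walkProd, ← List.range'_append, one_mul, List.map_append, List.prod_append]

theorem LoopConditions.excursion_mem (hf : LoopConditions K f) {h : ℤ} (σ : Bool) {x : A}
    (hx : x ∈ span K {1, gram f (h + stepSign σ)}) :
    stepAt f h σ * x * stepAt f (h + stepSign σ) (!σ) ∈ span K {1, gram f h} := by
  refine span_mono (Set.subset_insert _ _) (mul_mul_mem_of_mem_span_one_pair ?_ ?_ hx)
  · cases σ
    · simpa [stepAt, stepSign, sub_eq_add_neg] using hf.star_mul_self_mem h
    · simp only [stepAt, stepSign, ite_true, Bool.not_true, Bool.false_eq_true, ite_false,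
        add_sub_cancel_right]
      exact mem_span_singleton_self (gram f h)
  · cases σ
    · obtain ⟨c, hc⟩ := mem_span_singleton.1 (hf.star_mul_self_mem h)
      obtain ⟨d, hd⟩ := mem_span_singleton.1 (hf.gram_mul_self_mem h)
      refine mem_span_singleton.2 ⟨c * c * d, ?_⟩
      simp only [stepAt, stepSign, gram, Bool.not_false, ite_true, Bool.false_eq_true,
        ite_false, ← sub_eq_add_neg]
      rw [show star (f (h - 1)) * (f (h - 1) * star (f (h - 1))) * f (h - 1)
          = (star (f (h - 1)) * f (h - 1)) * (star (f (h - 1)) * f (h - 1)) by noncomm_ring,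
        ← hc, smul_mul_smul_comm, ← hd, gram, smul_smul]
    · simpa [stepAt, stepSign] using hf.conj_gram_mem h

theorem LoopConditions.walkProd_mem (hf : LoopConditions K f) :
    ∀ k a, height s (a + k) = height s a → walkProd f s a k ∈ span K {1, gram f (height s a)}
  | 0, _, _ => subset_span (by simp [walkProd_zero])
  | k + 1, a, hk => by
    set h := height s a
    have ha : height s (a + 1) = h + stepSign (s a) := height_succ a
    -- split at a step `b` back from `height s (a + 1)` to `h`: both remaining pieces are closed
    obtain ⟨b, hab, hbk, hb, hsb⟩ := exists_height_eq_of_one_le (s := s) (!s a) (a + 1) k (by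
      rw [← add_right_comm, add_assoc, hk, ha]; cases s a <;> simp [stepSign])
    have hb1 : height s (b + 1) = h := by
      rw [height_succ, hb, ha, hsb]; cases s a <;> simp [stepSign]
    have hsplit : walkProd f s a (k + 1) = (stepAt f h (s a) * walkProd f s (a + 1) (b - (a + 1))
        * stepAt f (h + stepSign (s a)) (!s a)) * walkProd f s (b + 1) (a + k - b) := by
      rw [show k + 1 = 1 + (b - (a + 1)) + 1 + (a + k - b) by omega, walkProd_add, walkProd_add,
        walkProd_add, walkProd_one, walkProd_one, show a + (1 + (b - (a + 1))) = b by omega,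
        show a + (1 + (b - (a + 1)) + 1) = b + 1 by omega, hb, ha, hsb]
    have hin := hf.walkProd_mem (b - (a + 1)) (a + 1)
      (by rw [show a + 1 + (b - (a + 1)) = b by omega, hb])
    have hout := hf.walkProd_mem (a + k - b) (b + 1)
      (by rw [show b + 1 + (a + k - b) = a + (k + 1) by omega, hk, hb1])
    rw [ha] at hin
    rw [hb1] at hout
    rw [hsplit]
    exact mul_mem_span_one_pair (hf.gram_mul_self_mem h) (hf.excursion_mem (s a) hin) hout
termination_by k => k
decreasing_by all_goals omega

theorem LoopConditions.exists_mul_prod_eq (hf : LoopConditions K f) (hΓ : IsIdempotentElem Γ)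
    (hΓN : Γ * gram f 0 * Γ ∈ K ∙ Γ) :
    ∀ t, IsBaseDecoration s Γ I t → ∃ τ ≤ t, height s τ = 0 ∧ ∃ y ∈ span K {1, gram f 0},
      Γ * ((List.range t).map fun j => stepAt f (height s j) (s j) * I j).prod
        = Γ * y * walkProd f s τ (t - τ)
  | 0, _ => ⟨0, le_rfl, rfl, 1, subset_span (by simp), by simp [walkProd_zero]⟩
  | t + 1, hI => by
    obtain ⟨τ, hτt, hτ, y, hy, hprod⟩ :=
      hf.exists_mul_prod_eq hΓ hΓN t fun j hj => hI j (by omega)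
    have hwalk : walkProd f s τ (t + 1 - τ)
        = walkProd f s τ (t - τ) * stepAt f (height s t) (s t) := by
      rw [Nat.sub_add_comm hτt, walkProd_add, walkProd_one, Nat.add_sub_cancel' hτt]
    rw [List.prod_range_succ, ← mul_assoc, hprod,
      show Γ * y * walkProd f s τ (t - τ) * (stepAt f (height s t) (s t) * I t)
        = Γ * y * walkProd f s τ (t + 1 - τ) * I t by simp only [hwalk, mul_assoc]]
    rcases hI t (by omega) with hIt | ⟨ht, hIt⟩
    · exact ⟨τ, by omega, hτ, y, hy, by rw [hIt, mul_one]⟩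
    · have hW := hf.walkProd_mem (t + 1 - τ) τ (by rw [Nat.add_sub_cancel' (by omega), ht, hτ])
      rw [hτ] at hW
      obtain ⟨y', hy', hy'eq⟩ :=
        exists_mul_mul_eq_of_isIdempotentElem hΓ hΓN
          (mul_mem_span_one_pair (hf.gram_mul_self_mem 0) hy hW) hIt
      exact ⟨t + 1, le_rfl, ht, y', hy', by
        rw [Nat.sub_self, walkProd_zero, mul_one, ← hy'eq, mul_assoc Γ y]⟩

theorem LoopConditions.mul_prod_mul_mem (hf : LoopConditions K f) (hΓ : IsIdempotentElem Γ)
    (hΓN : Γ * gram f 0 * Γ ∈ K ∙ Γ) {t : ℕ} (hI : IsBaseDecoration s Γ I t)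
    (ht : height s t = 0) :
    Γ * ((List.range t).map fun j => stepAt f (height s j) (s j) * I j).prod * Γ ∈ K ∙ Γ := by
  obtain ⟨τ, hτt, hτ, y, hy, hprod⟩ := hf.exists_mul_prod_eq hΓ hΓN t hI
  have hW := hf.walkProd_mem (t - τ) τ (by rw [Nat.add_sub_cancel' hτt, ht, hτ])
  rw [hτ] at hW
  rw [hprod, mul_assoc Γ y]
  exact mul_mul_mem_of_isIdempotentElem hΓ hΓN
    (mul_mem_span_one_pair (hf.gram_mul_self_mem 0) hy hW)

end Loops

theorem kronecker_single_mul_kronecker_single {R ι κ μ α β γ : Type*} [CommSemiring R]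
    [Fintype β] [Fintype κ] [DecidableEq ι] [DecidableEq κ] [DecidableEq μ]
    (X : Matrix α β R) (A : Matrix β γ R) (r : ι) (c p : κ) (q : μ) :
    (X ⊗ₖ single r c (1 : R)) * (A ⊗ₖ single p q 1)
      = (if c = p then X * A else 0) ⊗ₖ single r q 1 := by
  rw [← mul_kronecker_mul]
  split_ifs with h
  · rw [h, single_mul_single_same, one_mul]
  · rw [single_mul_single_of_ne _ _ _ _ h, kronecker_zero, zero_kronecker]

section Clock

open scoped Fin.NatCast Fin.IntCast Fin.CommRing ComplexOrder

variable {n : ℕ} [NeZero n]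

def hop (M : Fin n → Matrix S S ℂ) (i : Fin n) (σ : Bool) : Matrix (S × Fin n) (S × Fin n) ℂ :=
  if σ then Wop M i else (Wop M i)ᴴ

variable (n) in
def proj (Γ : Matrix S S ℂ) (e : Bool) : Matrix (S × Fin n) (S × Fin n) ℂ :=
  if e then 1 - P0 n Γ else P0 n Γ

def clock (s : ℕ → Bool) (t : ℕ) : Fin n := (height s t : Fin n)

def hopFactor (M : Fin n → Matrix S S ℂ) (i : Fin n) (σ : Bool) (c : Fin n) : Matrix S S ℂ :=
  if σ then (if c = i then M i else 0) else (if c = i + 1 then (M i)ᴴ else 0)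

def projFactor (Γ : Matrix S S ℂ) (e : Bool) (c : Fin n) : Matrix S S ℂ :=
  if c = 0 then (if e then 1 - Γ else Γ) else (if e then 1 else 0)

def systemProd (M : Fin n → Matrix S S ℂ) (Γ : Matrix S S ℂ) (i : ℕ → Fin n) (s e : ℕ → Bool)
    (t : ℕ) : Matrix S S ℂ :=
  ((List.range t).map fun j =>
    hopFactor M (i j) (s j) (clock s j) * projFactor Γ (e j) (clock (n := n) s (j + 1))).prod

section Factors

variable {T : Type*} {M : Fin n → Matrix T T ℂ} {i c : Fin n} {σ : Bool}

theorem conjTranspose_Wop (i : Fin n) : (Wop M i)ᴴ = (M i)ᴴ ⊗ₖ single (i + 1) i 1 := by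
  rw [Wop, conjTranspose_kronecker, conjTranspose_single, star_one]

theorem exists_hop_eq {Y : Matrix (T × Fin n) (T × Fin n) ℂ}
    (hY : ∃ i : Fin n, Y = Wop M i ∨ Y = (Wop M i)ᴴ) : ∃ i σ, Y = hop M i σ := by
  obtain ⟨i, h | h⟩ := hY
  exacts [⟨i, true, h⟩, ⟨i, false, h⟩]

theorem eq_of_hopFactor_ne_zero (h : hopFactor M i σ c ≠ 0) : c = if σ then i else i + 1 := by
  cases σ <;> simp only [hopFactor] at h ⊢ <;> split_ifs at h with hc <;> simp_all

theorem hopFactor_eq_stepAt {z : ℤ} (h : hopFactor M i σ z ≠ 0) :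
    hopFactor M i σ z = stepAt (fun z : ℤ => M z) z σ := by
  have hz := eq_of_hopFactor_ne_zero h
  cases σ <;> simp only [hopFactor, stepAt, ite_true, Bool.false_eq_true, ite_false] at hz ⊢
  · rw [if_pos hz, Int.cast_sub, hz, Int.cast_one, add_sub_cancel_right]
    rfl
  · rw [if_pos hz, hz]

theorem projFactor_ne_zero [DecidableEq T] {Γ : Matrix T T ℂ} {e : Bool}
    (h : projFactor Γ e c ≠ 0) : c = 0 ∨ e = true := by
  cases e <;> by_cases hc : c = 0 <;> simp_all [projFactor]

theorem eq_zero_of_eq_zero [Fintype T]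
    (hiii : ∀ i : Fin n, ∃ c : ℂ, M i * (M i)ᴴ = c • ((M (i - 1))ᴴ * M (i - 1)))
    {i₀ : Fin n} (h₀ : M i₀ = 0) (j : Fin n) : M j = 0 := by
  have hstep (i : Fin n) (h : M (i - 1) = 0) : M i = 0 := by
    obtain ⟨c, hc⟩ := hiii i
    rw [h, conjTranspose_zero, Matrix.zero_mul, smul_zero] at hc
    exact self_mul_conjTranspose_eq_zero.1 hc
  have hk (k : ℕ) : M (i₀ + k) = 0 := by
    induction k with
    | zero => simpa using h₀
    | succ k ih => exact hstep _ (by rwa [Nat.cast_succ, ← add_assoc, add_sub_cancel_right])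
  simpa using hk (j - i₀).val

end Factors

variable {s : ℕ → Bool}

theorem clock_zero : clock (n := n) s 0 = 0 := by simp [clock]

theorem clock_succ (t : ℕ) :
    clock (n := n) s (t + 1) = clock s t + (stepSign (s t) : Fin n) := by
  simp [clock, height_succ]

theorem clock_eq_zero_iff {t : ℕ} : clock (n := n) s t = 0 ↔ (n : ℤ) ∣ height s t :=
  CharP.intCast_eq_zero_iff (Fin n) n _

variable {M : Fin n → Matrix S S ℂ} {Γ : Matrix S S ℂ} {i : ℕ → Fin n} {e : ℕ → Bool} {m : ℕ}

theorem kronecker_single_mul_hop (X : Matrix S S ℂ) (c i : Fin n) (σ : Bool) :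
    (X ⊗ₖ single (0 : Fin n) c 1) * hop M i σ
      = (X * hopFactor M i σ c) ⊗ₖ single 0 (c + (stepSign σ : Fin n)) 1 := by
  cases σ
  · rw [hop, if_neg Bool.false_ne_true, conjTranspose_Wop, kronecker_single_mul_kronecker_single]
    by_cases h : c = i + 1 <;> simp [hopFactor, stepSign, h]
  · rw [hop, if_pos rfl, Wop, kronecker_single_mul_kronecker_single]
    by_cases h : c = i <;> simp [hopFactor, stepSign, h]

theorem kronecker_single_mul_proj (X : Matrix S S ℂ) (c : Fin n) (e : Bool) :
    (X ⊗ₖ single (0 : Fin n) c 1) * proj n Γ e = (X * projFactor Γ e c) ⊗ₖ single 0 c 1 := by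
  have hP : (X ⊗ₖ single (0 : Fin n) c 1) * P0 n Γ
      = (if c = 0 then X * Γ else 0) ⊗ₖ single 0 c 1 := by
    rw [P0, kronecker_single_mul_kronecker_single]
    split_ifs with h <;> simp [h]
  cases e
  · rw [proj, if_neg Bool.false_ne_true, hP]
    by_cases h : c = 0 <;> simp [projFactor, h]
  · rw [proj, if_pos rfl, Matrix.mul_sub, Matrix.mul_one, hP]
    by_cases h : c = 0
    · simp only [projFactor, h, if_pos, Matrix.mul_sub, Matrix.mul_one]
      rw [sub_eq_iff_eq_add, ← add_kronecker, sub_add_cancel]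
    · simp [projFactor, h]

theorem P0_mul_prod_hop_mul_proj (t : ℕ) :
    P0 n Γ * ((List.range t).map fun j => hop M (i j) (s j) * proj n Γ (e j)).prod
      = (Γ * systemProd M Γ i s e t) ⊗ₖ single 0 (clock s t) 1 := by
  induction t with
  | zero => simp [systemProd, clock_zero, P0]
  | succ t ih =>
    rw [List.prod_range_succ, ← mul_assoc, ih, ← mul_assoc, kronecker_single_mul_hop,
      ← clock_succ, kronecker_single_mul_proj]
    simp only [systemProd, List.prod_range_succ, mul_assoc]

/-- The closing `P₀` is `proj n Γ false`, attached to the last letter. -/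
theorem theta_eq (ε : ℕ → Bool) (Y : ℕ → Matrix (S × Fin n) (S × Fin n) ℂ) (hm : 1 ≤ m)
    (hY : ∀ j < m, Y j = hop M (i j) (s j)) :
    P0 n Γ * Y 0 * ((List.range (m - 1)).map
        (fun j => (if ε j then 1 - P0 n Γ else P0 n Γ) * Y (j + 1))).prod * P0 n Γ
      = (Γ * systemProd M Γ i s (Function.update ε (m - 1) false) m) ⊗ₖ single 0 (clock s m) 1 := by
  obtain ⟨k, rfl⟩ : ∃ k, m = k + 1 := ⟨m - 1, by omega⟩
  rw [Nat.add_sub_cancel, mul_prod_range_mul_eq, ← P0_mul_prod_hop_mul_proj, List.prod_range_succ,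
    ← mul_assoc, ← mul_assoc, hY k (by omega), Function.update_self]
  congr 3
  refine congrArg List.prod (List.map_congr_left fun j hj => ?_)
  rw [List.mem_range] at hj
  rw [hY j (by omega), Function.update_of_ne (by omega)]
  rfl

theorem factors_ne_zero_of_systemProd_ne_zero {t : ℕ} (h : systemProd M Γ i s e t ≠ 0) {j : ℕ}
    (hj : j < t) : hopFactor M (i j) (s j) (clock s j) ≠ 0 ∧
      projFactor Γ (e j) (clock (n := n) s (j + 1)) ≠ 0 := by
  by_contra hj0
  refine h (List.prod_eq_zero (List.mem_map.2 ⟨j, List.mem_range.2 hj, ?_⟩))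
  rcases not_and_or.1 hj0 with h0 | h0 <;> simp only [not_not] at h0 <;> simp [h0]

theorem clock_eq_zero_of_systemProd_ne_zero (h : systemProd M Γ i s e m ≠ 0) (hm : 1 ≤ m)
    (he : e (m - 1) = false) : clock (n := n) s m = 0 := by
  have := projFactor_ne_zero (factors_ne_zero_of_systemProd_ne_zero h (j := m - 1) (by omega)).2
  rwa [he, Nat.sub_add_cancel hm, or_iff_left Bool.false_ne_true] at this

/-- On a walk in one direction the clock returns to `0` only after `n` steps, and a `P₀` met
on the way would kill the product. -/
theorem eq_and_forall_of_forall_eq {σ : Bool} {ε : ℕ → Bool} (hσ : ∀ j < m, s j = σ)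
    (h : systemProd M Γ i s (Function.update ε (m - 1) false) m ≠ 0) (hm : 1 ≤ m) (hmn : m ≤ n) :
    m = n ∧ ∀ j, j < m - 1 → ε j = true := by
  have hcm := clock_eq_zero_iff.1
    (clock_eq_zero_of_systemProd_ne_zero h hm (Function.update_self ..))
  have hmn' : m = n := by
    by_contra hne
    exact not_dvd_height_of_forall_eq hσ (by omega) le_rfl (by omega) hcm
  refine ⟨hmn', fun j hj => ?_⟩
  have hj' := projFactor_ne_zero (factors_ne_zero_of_systemProd_ne_zero h (j := j) (by omega)).2
  rw [Function.update_of_ne (by omega), clock_eq_zero_iff] at hj'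
  exact hj'.resolve_left (not_dvd_height_of_forall_eq hσ (by omega) (by omega) (by omega))

theorem eq_natCast_of_forall_true (hσ : ∀ j < m, s j = true) (h : systemProd M Γ i s e m ≠ 0)
    {j : ℕ} (hj : j < m) : i j = j := by
  have := eq_of_hopFactor_ne_zero (factors_ne_zero_of_systemProd_ne_zero h hj).1
  rw [hσ j hj, if_pos rfl, clock, height_of_forall_eq hσ j hj.le] at this
  simpa [stepSign] using this.symm

theorem eq_natCast_of_forall_false (hσ : ∀ j < m, s j = false) (h : systemProd M Γ i s e m ≠ 0)
    (hmn : m ≤ n) {j : ℕ} (hj : j < m) : i j = (n - 1 - j : ℕ) := by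
  have := eq_of_hopFactor_ne_zero (factors_ne_zero_of_systemProd_ne_zero h hj).1
  rw [hσ j hj, if_neg Bool.false_ne_true, clock, height_of_forall_eq hσ j hj.le] at this
  rw [Nat.cast_sub (by omega), Nat.cast_sub (by omega), Fin.natCast_self, eq_sub_iff_add_eq]
  simp only [stepSign, Bool.false_eq_true, ite_false] at this
  push_cast at this
  linear_combination -this

theorem isBaseDecoration_projFactor (h : systemProd M Γ i s e m ≠ 0)
    (hzero : ∀ t ≤ m, clock (n := n) s t = 0 → height s t = 0) :
    IsBaseDecoration s Γ (fun j => projFactor Γ (e j) (clock (n := n) s (j + 1))) m := by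
  intro j hj
  have hne := (factors_ne_zero_of_systemProd_ne_zero h hj).2
  by_cases hc : clock (n := n) s (j + 1) = 0
  · refine Or.inr ⟨hzero _ hj hc, ?_⟩
    rcases Bool.eq_false_or_eq_true (e j) with he | he <;> simp [projFactor, hc, he]
  · have he := (projFactor_ne_zero hne).resolve_left hc
    simp [projFactor, hc, he]

theorem systemProd_mul_self (hΓ : IsIdempotentElem Γ) (hm : 1 ≤ m) (he : e (m - 1) = false)
    (hcm : clock (n := n) s m = 0) : systemProd M Γ i s e m * Γ = systemProd M Γ i s e m := by
  obtain ⟨k, rfl⟩ : ∃ k, m = k + 1 := ⟨m - 1, by omega⟩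
  rw [Nat.add_sub_cancel] at he
  simp only [systemProd, List.prod_range_succ, projFactor, he, hcm, if_true, Bool.false_eq_true,
    if_false, mul_assoc, hΓ.eq]

theorem exists_eq_smul_P0_of_ne (hf : LoopConditions ℂ fun z : ℤ => M z)
    (hΓ : IsIdempotentElem Γ) (hΓN : Γ * gram (fun z : ℤ => M z) 0 * Γ ∈ ℂ ∙ Γ) (hmn : m ≤ n)
    {k : ℕ} (hkm : k < m) (hk : s k ≠ s 0) (he : e (m - 1) = false) :
    ∃ c : ℂ, (Γ * systemProd M Γ i s e m) ⊗ₖ single 0 (clock s m) 1 = c • P0 n Γ := by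
  by_cases h : systemProd M Γ i s e m = 0
  · exact ⟨0, by simp [h]⟩
  have hcm := clock_eq_zero_of_systemProd_ne_zero h (by omega) he
  have hzero (t : ℕ) (ht : t ≤ m) (hct : clock (n := n) s t = 0) : height s t = 0 :=
    height_eq_zero_of_dvd hmn (Nat.pos_of_ne_zero (by rintro rfl; exact hk rfl)) hkm (Ne.symm hk)
      (clock_eq_zero_iff.1 hcm) ht (clock_eq_zero_iff.1 hct)
  have hstep : systemProd M Γ i s e m = ((List.range m).map fun j =>
      stepAt (fun z : ℤ => M z) (height s j) (s j) *
        projFactor Γ (e j) (clock (n := n) s (j + 1))).prod :=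
    congrArg _ (List.map_congr_left fun j hj => congrArg (· * _)
      (hopFactor_eq_stepAt (factors_ne_zero_of_systemProd_ne_zero h (List.mem_range.1 hj)).1))
  obtain ⟨c, hc⟩ := mem_span_singleton.1 (hf.mul_prod_mul_mem hΓ hΓN
    (isBaseDecoration_projFactor h hzero) (hzero m le_rfl hcm))
  refine ⟨c, ?_⟩
  rw [hcm, ← systemProd_mul_self hΓ (by omega) he hcm, ← mul_assoc, hstep, ← hc, smul_kronecker]
  rfl

theorem loopConditions_of
    (hi : ∀ i : Fin n, ∃ c : ℂ,
      M i * M (i + 1) * (M (i + 1))ᴴ * (M i)ᴴ = c • ((M i * (M i)ᴴ) * (M i * (M i)ᴴ)))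
    (hii : ∀ i : Fin n, ∃ c : ℂ, (M i * (M i)ᴴ) * (M i * (M i)ᴴ) = c • (M i * (M i)ᴴ))
    (hiii : ∀ i : Fin n, ∃ c : ℂ, M i * (M i)ᴴ = c • ((M (i - 1))ᴴ * M (i - 1)))
    (hM : ∀ i, M i ≠ 0) : LoopConditions ℂ fun z : ℤ => M z where
  gram_mul_self_mem z := by
    obtain ⟨c, hc⟩ := hii z
    exact mem_span_singleton.2 ⟨c, hc.symm⟩
  conj_gram_mem z := by
    obtain ⟨c, hc⟩ := hi z
    obtain ⟨d, hd⟩ := hii z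
    refine mem_span_singleton.2 ⟨c * d, ?_⟩
    simp only [gram, star_eq_conjTranspose, Int.cast_add, Int.cast_one]
    rw [mul_smul, ← hd, ← hc]
    simp only [Matrix.mul_assoc]
  star_mul_self_mem z := by
    obtain ⟨c, hc⟩ := hiii z
    have hc0 : c ≠ 0 := by
      rintro rfl
      exact hM z (self_mul_conjTranspose_eq_zero.1 (by rwa [zero_smul] at hc))
    refine mem_span_singleton.2 ⟨c⁻¹, ?_⟩
    simp only [gram, star_eq_conjTranspose, Int.cast_sub, Int.cast_one]
    rw [hc, smul_smul, inv_mul_cancel₀ hc0, one_smul]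

theorem mul_gram_zero_mul_mem (hiv : ∃ c : ℂ, Γ * (M 0 * (M 0)ᴴ) * Γ = c • Γ) :
    Γ * gram (fun z : ℤ => M z) 0 * Γ ∈ ℂ ∙ Γ := by
  obtain ⟨c, hc⟩ := hiv
  exact mem_span_singleton.2 ⟨c, by simpa [gram, star_eq_conjTranspose] using hc.symm⟩

end Clock

end ClockGadget

open ClockGadget

theorem statement14_general (n : ℕ) [NeZero n]
    (Γ₀ : Matrix S S ℂ) (hΓproj : Γ₀ * Γ₀ = Γ₀)
    (M : Fin n → Matrix S S ℂ)
    (hi : ∀ i : Fin n, ∃ c : ℂ,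
      M i * M (i + 1) * (M (i + 1))ᴴ * (M i)ᴴ = c • ((M i * (M i)ᴴ) * (M i * (M i)ᴴ)))
    (hii : ∀ i : Fin n, ∃ c : ℂ,
      (M i * (M i)ᴴ) * (M i * (M i)ᴴ) = c • (M i * (M i)ᴴ))
    (hiii : ∀ i : Fin n, ∃ c : ℂ,
      M i * (M i)ᴴ = c • ((M (i - 1))ᴴ * M (i - 1)))
    (hiv : ∃ c : ℂ, Γ₀ * (M 0 * (M 0)ᴴ) * Γ₀ = c • Γ₀)
    (m : ℕ) (hm1 : 1 ≤ m) (hmn : m ≤ n)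
    (ε : ℕ → Bool) (Y : ℕ → Matrix (S × Fin n) (S × Fin n) ℂ)
    (hY : ∀ j < m, ∃ i : Fin n, Y j = Wop M i ∨ Y j = (Wop M i)ᴴ)
    (hnot1 : ¬ (m = n ∧ (∀ j, j < m - 1 → ε j = true) ∧
      ∀ j < m, Y j = Wop M (Fin.ofNat n (j : ℕ))))
    (hnot2 : ¬ (m = n ∧ (∀ j, j < m - 1 → ε j = true) ∧
      ∀ j < m, Y j = (Wop M (Fin.ofNat n (n - 1 - j : ℕ)))ᴴ)) :
    ∃ c : ℂ,
      P0 n Γ₀ * Y 0 *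
          ((List.range (m - 1)).map
            (fun j => (if ε j then 1 - P0 n Γ₀ else P0 n Γ₀) * Y (j + 1))).prod *
          P0 n Γ₀
        = c • P0 n Γ₀ := by
  by_cases hM : ∃ i, M i = 0
  · obtain ⟨i₀, h₀⟩ := hM
    obtain ⟨i, hY0 | hY0⟩ := hY 0 hm1 <;>
      exact ⟨0, by simp [hY0, Wop, eq_zero_of_eq_zero hiii h₀ i]⟩
  push Not at hM
  choose! i s hYis using fun j hj => exists_hop_eq (hY j hj)
  rw [theta_eq ε Y hm1 hYis]
  by_cases hmono : ∀ j < m, s j = s 0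
  · by_cases hD : systemProd M Γ₀ i s (Function.update ε (m - 1) false) m = 0
    · exact ⟨0, by simp [hD]⟩
    obtain ⟨hmn', hε⟩ := eq_and_forall_of_forall_eq hmono hD hm1 hmn
    cases hs0 : s 0 <;> rw [hs0] at hmono
    · refine absurd ⟨hmn', hε, fun j hj => ?_⟩ hnot2
      rw [hYis j hj, hop, hmono j hj, eq_natCast_of_forall_false hmono hD hmn hj]
      rfl
    · refine absurd ⟨hmn', hε, fun j hj => ?_⟩ hnot1
      rw [hYis j hj, hop, hmono j hj, eq_natCast_of_forall_true hmono hD hj]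
      rfl
  · push Not at hmono
    obtain ⟨k, hkm, hk⟩ := hmono
    exact exists_eq_smul_P0_of_ne (loopConditions_of hi hii hiii hM) hΓproj
      (mul_gram_zero_mul_mem hiv) hmn hkm hk (Function.update_self ..)

/-- Under the proportionality conditions (i)–(iv), every operator
`Θ(ε,Y) = P₀ Y₁ P_{ε₁} Y₂ ⋯ P_{ε_{m-1}} Y_m P₀` of order `m ≤ n`, with each `Y_j` among the
`W_i, W_i†`, other than `Θₙ↓ = P₀W₀P₁⋯P₁W_{n-1}P₀` and `Θₙ↑ = P₀W_{n-1}†P₁⋯P₁W₀†P₀`,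
is proportional to `P₀`. Here `ε j = true` encodes `ε_j = 1` (i.e. the projection `P₁`). -/
theorem statement14 (n : ℕ) [NeZero n] (hn : 2 ≤ n)
    (Γ₀ : Matrix S S ℂ) (hΓproj : Γ₀ * Γ₀ = Γ₀) (hΓsa : Γ₀ᴴ = Γ₀)
    (M : Fin n → Matrix S S ℂ)
    (hi : ∀ i : Fin n, ∃ c : ℂ,
      M i * M (i + 1) * (M (i + 1))ᴴ * (M i)ᴴ = c • ((M i * (M i)ᴴ) * (M i * (M i)ᴴ)))
    (hii : ∀ i : Fin n, ∃ c : ℂ,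
      (M i * (M i)ᴴ) * (M i * (M i)ᴴ) = c • (M i * (M i)ᴴ))
    (hiii : ∀ i : Fin n, ∃ c : ℂ,
      M i * (M i)ᴴ = c • ((M (i - 1))ᴴ * M (i - 1)))
    (hiv : ∃ c : ℂ, Γ₀ * (M 0 * (M 0)ᴴ) * Γ₀ = c • Γ₀)
    (m : ℕ) (hm1 : 1 ≤ m) (hmn : m ≤ n)
    (ε : ℕ → Bool) (Y : ℕ → Matrix (S × Fin n) (S × Fin n) ℂ)
    (hY : ∀ j < m, ∃ i : Fin n, Y j = Wop M i ∨ Y j = (Wop M i)ᴴ)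
    (hnot1 : ¬ (m = n ∧ (∀ j, j < m - 1 → ε j = true) ∧
      ∀ j < m, Y j = Wop M (Fin.ofNat n (j : ℕ))))
    (hnot2 : ¬ (m = n ∧ (∀ j, j < m - 1 → ε j = true) ∧
      ∀ j < m, Y j = (Wop M (Fin.ofNat n (n - 1 - j : ℕ)))ᴴ)) :
    ∃ c : ℂ,
      P0 n Γ₀ * Y 0 *
          ((List.range (m - 1)).map
            (fun j => (if ε j then 1 - P0 n Γ₀ else P0 n Γ₀) * Y (j + 1))).prod *
          P0 n Γ₀
        = c • P0 n Γ₀ :=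
  statement14_general n Γ₀ hΓproj M hi hii hiii hiv m hm1 hmn ε Y hY hnot1 hnot2
end
end

section
/- In the clock-gadget setting with clock dimension n ≥ 2 (no proportionality conditions assumed), let V = ∑_{i=0}^{n−1} (W_i† + W_i), S^ℓ = (−1)^ℓ P₁ for integers ℓ ≥ 1 and S^0 = −P₀, and 𝒰^{(m)} = ∑_{(ℓ₁,…,ℓ_m) ∈ 𝒫_m} S^{ℓ₁} V S^{ℓ₂} V ⋯ S^{ℓ_m} V P₀. Then for every m ≥ 1 the operator norm satisfies ‖𝒰^{(m)}‖ ≤ (16 · max_{0≤i≤n−1} ‖M_i‖)^m. -/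
open Matrix Kronecker BigOperators

noncomputable section

variable {S : Type*} [Fintype S] [DecidableEq S]

open scoped Classical in
/-- The set `𝒫_m` of `m`-tuples `(ℓ₁, …, ℓ_m)` of nonnegative integers with `∑ᵢ ℓᵢ = m` and
`∑_{i=1}^p ℓᵢ ≥ p` for all `p = 1, …, m-1`. (Since the total sum is `m`, every entry is at
most `m`, so the tuples form a finite set.) -/
def Pset (m : ℕ) : Finset (Fin m → ℕ) :=
  (Fintype.piFinset fun _ : Fin m => Finset.range (m + 1)).filter
    (fun ℓ => (∑ i, ℓ i) = m ∧
      ∀ p ∈ Finset.Icc 1 (m - 1),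
        p ≤ ∑ i ∈ Finset.univ.filter (fun i : Fin m => (i : ℕ) < p), ℓ i)

/-- The perturbation `V = ∑ᵢ (Wᵢ† + Wᵢ)`. -/
def Vop {n : ℕ} [NeZero n] (M : Fin n → Matrix S S ℂ) :
    Matrix (S × Fin n) (S × Fin n) ℂ :=
  ∑ i : Fin n, ((Wop M i)ᴴ + Wop M i)

/-- The reduced resolvent: `S^ℓ = (-1)^ℓ P₁` for `ℓ ≥ 1` and `S^0 = -P₀`. -/
def Sres (n : ℕ) [NeZero n] (Γ₀ : Matrix S S ℂ) (ℓ : ℕ) :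
    Matrix (S × Fin n) (S × Fin n) ℂ :=
  if ℓ = 0 then -(P0 n Γ₀) else ((-1 : ℂ)) ^ ℓ • (1 - P0 n Γ₀)

/-- The `m`-th order term `𝒰^{(m)} = ∑_{ℓ ∈ 𝒫_m} S^{ℓ₁} V S^{ℓ₂} V ⋯ S^{ℓ_m} V P₀` of
Bloch's perturbation series. -/
def Uop (n : ℕ) [NeZero n] (Γ₀ : Matrix S S ℂ) (M : Fin n → Matrix S S ℂ) (m : ℕ) :
    Matrix (S × Fin n) (S × Fin n) ℂ :=
  ∑ ℓ ∈ Pset m,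
    ((List.finRange m).map (fun j => Sres n Γ₀ (ℓ j) * Vop M)).prod * P0 n Γ₀

/-!
Each summand of `𝒰^{(m)}` is a product of `m` factors `S^ℓ V` followed by `P₀`. Since `P₀` and
`P₁ = 1 - P₀` are orthogonal projections, `‖S^ℓ‖ ≤ 1` and `‖P₀‖ ≤ 1`. The operator `∑ᵢ Wᵢ` maps
a vector with clock components `(xᵢ)ᵢ` to `(Mᵢ x_{i+1})ᵢ`, a cyclic shift weighted blockwise by
the `Mᵢ`, so its norm is at most `C = maxᵢ ‖Mᵢ‖`, and `‖V‖ ≤ 2C`. Hence every summand has norm at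
most `(2C)^m`. Finally a tuple in `𝒫_m` is the multiplicity vector of a multiset of size `m` on
`m` letters, and there are `C(2m-1, m) ≤ 4^m` of those; so `‖𝒰^{(m)}‖ ≤ (8C)^m`.
-/

namespace Matrix

theorem IsStarProjection.kronecker {R ι κ : Type*} [Fintype ι] [Fintype κ] [CommSemiring R]
    [StarRing R] {A : Matrix ι ι R} {B : Matrix κ κ R} (hA : IsStarProjection A)
    (hB : IsStarProjection B) : IsStarProjection (A ⊗ₖ B) where
  isIdempotentElem := by
    rw [IsIdempotentElem, ← mul_kronecker_mul, hA.isIdempotentElem.eq, hB.isIdempotentElem.eq]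
  isSelfAdjoint := by
    rw [IsSelfAdjoint, star_eq_conjTranspose, conjTranspose_kronecker,
      ← star_eq_conjTranspose, ← star_eq_conjTranspose, hA.isSelfAdjoint.star_eq,
      hB.isSelfAdjoint.star_eq]

theorem isStarProjection_single_one {R ι : Type*} [Fintype ι] [DecidableEq ι] [Semiring R]
    [StarRing R] (i : ι) : IsStarProjection (single i i (1 : R)) where
  isIdempotentElem := by rw [IsIdempotentElem, single_mul_single_same, mul_one]
  isSelfAdjoint := by rw [IsSelfAdjoint, star_eq_conjTranspose, conjTranspose_single, star_one]

end Matrix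

theorem List.norm_prod_mul_le {R : Type*} [SeminormedRing R] {c : ℝ} (hc : 0 ≤ c) (L : List R)
    (hL : ∀ a ∈ L, ‖a‖ ≤ c) (b : R) : ‖L.prod * b‖ ≤ c ^ L.length * ‖b‖ := by
  induction L with
  | nil => simp
  | cons a L ih =>
    calc ‖(a :: L).prod * b‖ ≤ ‖a‖ * ‖L.prod * b‖ := by
          rw [List.prod_cons, mul_assoc]; exact norm_mul_le _ _
      _ ≤ c * (c ^ L.length * ‖b‖) := by
          gcongr
          exacts [hL a List.mem_cons_self, ih fun x hx => hL x (List.mem_cons_of_mem a hx)]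
      _ = c ^ (a :: L).length * ‖b‖ := by rw [List.length_cons, pow_succ]; ring

theorem card_le_card_sym_of_sum_eq {k m : ℕ} (s : Finset (Fin k → ℕ))
    (hs : ∀ ℓ ∈ s, ∑ i, ℓ i = m) : s.card ≤ Fintype.card (Sym (Fin k) m) := by
  classical
  let e := Sym.equivNatSumOfFintype (Fin k) m
  calc s.card ≤ (Finset.univ.image fun x => (e x : Fin k → ℕ)).card := by
        refine Finset.card_le_card fun ℓ hℓ => Finset.mem_image.mpr ?_
        exact ⟨e.symm ⟨ℓ, hs ℓ hℓ⟩, Finset.mem_univ _, by rw [e.apply_symm_apply]⟩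
    _ ≤ Fintype.card (Sym (Fin k) m) := Finset.card_image_le

theorem sum_eq_of_mem_Pset {m : ℕ} {ℓ : Fin m → ℕ} (h : ℓ ∈ Pset m) : ∑ i, ℓ i = m := by
  simp only [Pset, Finset.mem_filter] at h
  exact h.2.1

theorem card_Pset_le (m : ℕ) : (Pset m).card ≤ 4 ^ m := by
  calc (Pset m).card ≤ Fintype.card (Sym (Fin m) m) :=
        card_le_card_sym_of_sum_eq _ fun _ => sum_eq_of_mem_Pset
    _ = (m + m - 1).choose m := by rw [Sym.card_sym_eq_choose, Fintype.card_fin]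
    _ ≤ (2 * m).choose m := Nat.choose_le_choose m (by omega)
    _ ≤ 4 ^ m := Nat.centralBinom_le_four_pow m

section L2OpNorm

open scoped Matrix.Norms.L2Operator

variable {n : ℕ} [NeZero n]

omit [DecidableEq S] in
theorem isStarProjection_P0 {Γ₀ : Matrix S S ℂ} (hΓ : IsStarProjection Γ₀) :
    IsStarProjection (P0 n Γ₀) :=
  hΓ.kronecker (Matrix.isStarProjection_single_one 0)

theorem norm_Sres_le_one {Γ₀ : Matrix S S ℂ} (hΓ : IsStarProjection Γ₀) (ℓ : ℕ) :
    ‖Sres n Γ₀ ℓ‖ ≤ 1 := by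
  have hP := isStarProjection_P0 (n := n) hΓ
  unfold Sres
  split_ifs
  · rw [norm_neg]; exact hP.norm_le
  · rw [norm_smul, norm_pow, norm_neg, norm_one, one_pow, one_mul]; exact hP.one_sub.norm_le

omit [Fintype S] [DecidableEq S] in
theorem sum_Wop_apply (M : Fin n → Matrix S S ℂ) (s t : S) (i k : Fin n) :
    (∑ j, Wop M j) (s, i) (t, k) = if i + 1 = k then M i s t else 0 := by
  simp only [Matrix.sum_apply, Wop, Matrix.kroneckerMap_apply, Matrix.single_apply]
  rw [Fintype.sum_eq_single i fun j hj => by simp [hj]]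
  split_ifs <;> simp_all

omit [DecidableEq S] in
theorem mulVec_sum_Wop (M : Fin n → Matrix S S ℂ) (v : S × Fin n → ℂ) (s : S) (i : Fin n) :
    ((∑ j, Wop M j) *ᵥ v) (s, i) = (M i *ᵥ fun t => v (t, i + 1)) s := by
  simp only [Matrix.mulVec, dotProduct, sum_Wop_apply, Fintype.sum_prod_type, ite_mul, zero_mul,
    Finset.sum_ite_eq, Finset.mem_univ, if_true]

theorem norm_sum_Wop_le (M : Fin n → Matrix S S ℂ) {C : ℝ} (hM : ∀ i, ‖M i‖ ≤ C) :
    ‖∑ i, Wop M i‖ ≤ C := by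
  have hC : 0 ≤ C := (norm_nonneg _).trans (hM 0)
  rw [Matrix.l2_opNorm_def]
  refine ContinuousLinearMap.opNorm_le_bound _ hC fun x => ?_
  let slice : Fin n → EuclideanSpace ℂ S := fun i => WithLp.toLp 2 fun t => x (t, i)
  have hx : ‖x‖ ^ 2 = ∑ i, ‖slice i‖ ^ 2 := by
    simp only [EuclideanSpace.norm_sq_eq, Fintype.sum_prod_type_right]
    rfl
  have hMx : ∀ i, ‖(EuclideanSpace.equiv S ℂ).symm (M i *ᵥ slice (i + 1))‖ ≤ C * ‖slice (i + 1)‖ :=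
    fun i => (Matrix.l2_opNorm_mulVec _ _).trans (by gcongr; exact hM i)
  refine (pow_le_pow_iff_left₀ (norm_nonneg _) (by positivity) two_ne_zero).mp ?_
  calc ‖_‖ ^ 2 = ∑ i, ‖(EuclideanSpace.equiv S ℂ).symm (M i *ᵥ slice (i + 1))‖ ^ 2 := by
        simp only [EuclideanSpace.norm_sq_eq, Fintype.sum_prod_type_right]
        refine Finset.sum_congr rfl fun i _ => Finset.sum_congr rfl fun s _ => ?_
        exact congrArg (‖·‖ ^ 2) (mulVec_sum_Wop M x.ofLp s i)
    _ ≤ ∑ i, (C * ‖slice (i + 1)‖) ^ 2 := by gcongr with i; exact hMx i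
    _ = C ^ 2 * ∑ i, ‖slice (i + 1)‖ ^ 2 := by simp only [mul_pow, Finset.mul_sum]
    _ = (C * ‖x‖) ^ 2 := by
        rw [mul_pow, hx]
        congr 1
        exact Equiv.sum_comp (Equiv.addRight 1) fun i => ‖slice i‖ ^ 2

theorem norm_Vop_le (M : Fin n → Matrix S S ℂ) {C : ℝ} (hM : ∀ i, ‖M i‖ ≤ C) :
    ‖Vop M‖ ≤ 2 * C := by
  have hW := norm_sum_Wop_le M hM
  calc ‖Vop M‖ = ‖(∑ i, Wop M i)ᴴ + ∑ i, Wop M i‖ := by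
        rw [Vop, Finset.sum_add_distrib, Matrix.conjTranspose_sum]
    _ ≤ ‖∑ i, Wop M i‖ + ‖∑ i, Wop M i‖ := by
        grw [norm_add_le, Matrix.l2_opNorm_conjTranspose]
    _ ≤ 2 * C := by linarith

theorem norm_Uop_le {Γ₀ : Matrix S S ℂ} (hΓ : IsStarProjection Γ₀) (M : Fin n → Matrix S S ℂ)
    {C : ℝ} (hM : ∀ i, ‖M i‖ ≤ C) (m : ℕ) :
    ‖Uop n Γ₀ M m‖ ≤ (Pset m).card * (2 * C) ^ m := by
  have hC : 0 ≤ C := (norm_nonneg _).trans (hM 0)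
  have hfactor : ∀ ℓ, ‖Sres n Γ₀ ℓ * Vop M‖ ≤ 2 * C := fun ℓ =>
    calc ‖Sres n Γ₀ ℓ * Vop M‖ ≤ ‖Sres n Γ₀ ℓ‖ * ‖Vop M‖ := norm_mul_le _ _
      _ ≤ 1 * (2 * C) := by gcongr; exacts [norm_Sres_le_one hΓ ℓ, norm_Vop_le M hM]
      _ = 2 * C := one_mul _
  have hterm : ∀ ℓ : Fin m → ℕ,
      ‖((List.finRange m).map fun j => Sres n Γ₀ (ℓ j) * Vop M).prod * P0 n Γ₀‖ ≤ (2 * C) ^ m := by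
    intro ℓ
    calc _ ≤ (2 * C) ^ m * ‖P0 n Γ₀‖ := by
          simpa using List.norm_prod_mul_le (by positivity)
            ((List.finRange m).map fun j => Sres n Γ₀ (ℓ j) * Vop M)
            (by simpa using fun j => hfactor (ℓ j)) (P0 n Γ₀)
      _ ≤ (2 * C) ^ m := mul_le_of_le_one_right (by positivity) (isStarProjection_P0 hΓ).norm_le
  calc ‖Uop n Γ₀ M m‖ ≤ ∑ ℓ ∈ Pset m,
        ‖((List.finRange m).map fun j => Sres n Γ₀ (ℓ j) * Vop M).prod * P0 n Γ₀‖ :=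
        norm_sum_le _ _
    _ ≤ ∑ _ℓ ∈ Pset m, (2 * C) ^ m := Finset.sum_le_sum fun ℓ _ => hterm ℓ
    _ = (Pset m).card * (2 * C) ^ m := by rw [Finset.sum_const, nsmul_eq_mul]

end L2OpNorm

open scoped Matrix.Norms.L2Operator in
theorem statement16_general (n : ℕ) [NeZero n]
    (Γ₀ : Matrix S S ℂ) (hΓproj : Γ₀ * Γ₀ = Γ₀) (hΓsa : Γ₀ᴴ = Γ₀)
    (M : Fin n → Matrix S S ℂ) (m : ℕ) :
    ‖Uop n Γ₀ M m‖ ≤ (16 * ⨆ i : Fin n, ‖M i‖) ^ m := by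
  set C := ⨆ i : Fin n, ‖M i‖
  have hM : ∀ i, ‖M i‖ ≤ C := le_ciSup (Set.finite_range _).bddAbove
  have hC : 0 ≤ C := (norm_nonneg _).trans (hM 0)
  calc ‖Uop n Γ₀ M m‖ ≤ (Pset m).card * (2 * C) ^ m := norm_Uop_le ⟨hΓproj, hΓsa⟩ M hM m
    _ ≤ 4 ^ m * (2 * C) ^ m := by gcongr; exact_mod_cast card_Pset_le m
    _ = (8 * C) ^ m := by rw [← mul_pow]; ring_nf
    _ ≤ (16 * C) ^ m := by gcongr; linarith

open scoped Matrix.Norms.L2Operator in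
/-- For every `m ≥ 1`, the (ℓ²-)operator norm of `𝒰^{(m)}` is bounded by
`(16 · maxᵢ ‖Mᵢ‖)^m`. -/
theorem statement16 (n : ℕ) [NeZero n] (hn : 2 ≤ n)
    (Γ₀ : Matrix S S ℂ) (hΓproj : Γ₀ * Γ₀ = Γ₀) (hΓsa : Γ₀ᴴ = Γ₀)
    (M : Fin n → Matrix S S ℂ) (m : ℕ) (hm : 1 ≤ m) :
    ‖Uop n Γ₀ M m‖ ≤ (16 * ⨆ i : Fin n, ‖M i‖) ^ m :=
  statement16_general n Γ₀ hΓproj hΓsa M m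
end
end
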